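/- arXiv:1307.4056 — 8 statements merged into one kernel-verified Lean document; each statement's English description precedes it below -/
import Mathlib

section
/- Let P(z) = ∏_{j=1}^n (z - z_j) where each z_j lies on the unit circle, z_j = e^{i t_j} with 0 ≤ t_1 < t_2 < ... < t_n < 2π, and set t_{n+1} = t_1 + 2π. Let m = min_{1 ≤ j ≤ n} max_{t ∈ [t_j, t_{j+1}]} |P(e^{it})|. Then for all z on the unit circle, |P'(z)|² ≥ (n/2)² (|P(z)|² + max(m² - |P(z)|², 0)), and in particular |P'(z)| ≥ nm/2. -/
/-!
On the circle, `P(e^{is}) = c e^{ins/2} g(s)` with `|c| = 1` and the real function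
`g(s) = ∏ⱼ 2 sin((s - tⱼ)/2)`, so `|P'(e^{is})|² = g'(s)² + (n/2)² g(s)²`; this already gives
`(n/2)|P| ≤ |P'|`. If `g'(τ)² + (n/2)² g(τ)² < (n/2)² m²`, the sinusoid
`w(s) = Re(γ e^{in(s-τ)/2})` with `γ = g(τ) - 2i g'(τ)/n` agrees with `g` to first order at `τ`
and satisfies `|w| ≤ |γ| < m`. On each of the `n` arcs `|g|` reaches at least `m`, and the sign
of `g` alternates from arc to arc, so `g - w` changes sign between consecutive peaks and has `n`
zeros on the circle besides the double zero at `τ`. But `e^{ins/2}(g - w)(s)` is a polynomial of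
degree at most `n` in `e^{is}`, hence vanishes identically, which is absurd at the peaks.
-/

open Complex Real Set

open Polynomial ComplexConjugate

theorem Polynomial.eq_zero_of_isRoot_of_isRoot_derivative {R : Type*} [CommRing R] [IsDomain R]
    {p : R[X]} {z : R} {S : Finset R} (hz : p.IsRoot z) (hz' : p.derivative.IsRoot z)
    (hS : ∀ x ∈ S, p.IsRoot x) (hdeg : p.natDegree ≤ S.card) : p = 0 := by
  classical
  obtain ⟨q, rfl⟩ := dvd_iff_isRoot.mpr hz
  obtain ⟨r, rfl⟩ := dvd_iff_isRoot.mpr (by simpa [derivative_mul] using hz' : q.IsRoot z)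
  suffices r = 0 by simp [this]
  by_contra hr
  rw [← mul_assoc, natDegree_mul (mul_ne_zero (X_sub_C_ne_zero z) (X_sub_C_ne_zero z)) hr,
    natDegree_mul (X_sub_C_ne_zero z) (X_sub_C_ne_zero z), natDegree_X_sub_C] at hdeg
  refine hr (eq_zero_of_natDegree_lt_card_of_eval_eq_zero' r (S.erase z) (fun x hx ↦ ?_) ?_)
  · obtain ⟨hxz, hx⟩ := Finset.mem_erase.mp hx
    simpa [IsRoot, sub_eq_zero, hxz] using hS x hx
  · have := Finset.pred_card_le_card_erase (s := S) (a := z)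
    omega

theorem exists_mem_Ioo_eq_zero_of_mul_neg {f : ℝ → ℝ} {a b : ℝ} (hab : a ≤ b)
    (hf : ContinuousOn f (Icc a b)) (h : f a * f b < 0) : ∃ c ∈ Ioo a b, f c = 0 := by
  rcases mul_neg_iff.mp h with ⟨ha, hb⟩ | ⟨ha, hb⟩
  · exact intermediate_value_Ioo' hab hf ⟨hb, ha⟩
  · exact intermediate_value_Ioo hab hf ⟨ha, hb⟩

theorem exists_mem_Icc_inf'_sSup_image_le {ι : Type*} {S : Finset ι} (hS : S.Nonempty)
    {f : ℝ → ℝ} (hf : Continuous f) {a b : ι → ℝ} (hab : ∀ j ∈ S, a j ≤ b j) {j : ι}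
    (hj : j ∈ S) :
    ∃ s ∈ Icc (a j) (b j), S.inf' hS (fun i ↦ sSup (f '' Icc (a i) (b i))) ≤ f s := by
  obtain ⟨s, hs, hsup⟩ :=
    isCompact_Icc.exists_sSup_image_eq (nonempty_Icc.2 (hab j hj)) hf.continuousOn
  exact ⟨s, hs, hsup ▸ Finset.inf'_le _ hj⟩

theorem monotoneOn_Icc_add_one {α : Type*} [Preorder α] {f : ℕ → α} {a b : ℕ}
    (hf : MonotoneOn f (Icc a b)) (hb : f b ≤ f (b + 1)) : MonotoneOn f (Icc a (b + 1)) := by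
  refine monotoneOn_of_le_succ ordConnected_Icc fun k _ hk hk' ↦ ?_
  rw [Order.succ_eq_add_one] at hk' ⊢
  obtain ⟨⟨hak, -⟩, ⟨-, hkb⟩⟩ := And.intro hk hk'
  rcases (show k < b ∨ k = b by omega) with h | rfl
  · exact hf ⟨hak, h.le⟩ ⟨by omega, h⟩ k.le_succ
  · exact hb

theorem exp_mul_I_sub_exp_mul_I (s t : ℝ) :
    cexp (s * I) - cexp (t * I) =
      I * cexp (↑((s + t) / 2) * I) * ↑(2 * Real.sin ((s - t) / 2)) := by
  have hs : cexp (s * I) = cexp (↑((s + t) / 2) * I) * cexp (↑((s - t) / 2) * I) := by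
    rw [← Complex.exp_add]; congr 1; push_cast; ring
  have ht : cexp (t * I) = cexp (↑((s + t) / 2) * I) * cexp (-(↑((s - t) / 2) * I)) := by
    rw [← Complex.exp_add]; congr 1; push_cast; ring
  rw [hs, ht, ofReal_mul, ofReal_sin, Complex.sin]
  push_cast
  ring_nf
  rw [I_sq]; ring

theorem hasDerivAt_eval_exp_mul_I (p : ℂ[X]) (s : ℝ) :
    HasDerivAt (fun s : ℝ ↦ p.eval (cexp (s * I)))
      (p.derivative.eval (cexp (s * I)) * (cexp (s * I) * I)) s := by
  have h := (p.hasDerivAt (cexp (s * I))).comp (s : ℂ) (hasDerivAt_mul_const I).cexp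
  simpa using h.comp_ofReal

theorem norm_derivative_eval_exp_mul_I {p : ℂ[X]} {ν : ℝ} {f : ℝ → ℝ}
    (hf : ∀ s : ℝ, p.eval (cexp (s * I)) = cexp (↑(ν * s) * I) * f s) {τ f' : ℝ}
    (hf' : HasDerivAt f f' τ) :
    ‖p.derivative.eval (cexp (τ * I))‖ = √(f' ^ 2 + (ν * f τ) ^ 2) := by
  have hrep : HasDerivAt (fun s : ℝ ↦ cexp (↑(ν * s) * I) * f s)
      (cexp (↑(ν * τ) * I) * (↑ν * I) * f τ + cexp (↑(ν * τ) * I) * f') τ := by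
    have he : HasDerivAt (fun s : ℝ ↦ cexp (↑(ν * s) * I)) (cexp (↑(ν * τ) * I) * (↑ν * I)) τ := by
      have := (((hasDerivAt_id τ).const_mul ν).ofReal_comp.mul_const I).cexp
      simpa using this
    exact he.mul hf'.ofReal_comp
  have huniq := (hasDerivAt_eval_exp_mul_I p τ).unique (by simpa only [hf] using hrep)
  have hnorm := congrArg norm huniq
  rw [norm_mul, norm_mul, norm_exp_ofReal_mul_I, norm_I, mul_one, mul_one,
    show cexp (↑(ν * τ) * I) * (↑ν * I) * ↑(f τ) + cexp (↑(ν * τ) * I) * ↑f' =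
      cexp (↑(ν * τ) * I) * (↑f' + ↑(ν * f τ) * I) by push_cast; ring,
    norm_mul, norm_exp_ofReal_mul_I, one_mul, norm_add_mul_I] at hnorm
  exact hnorm

theorem Polynomial.eq_zero_of_double_zero_on_circle {D : ℂ[X]} {ν : ℝ} {d : ℝ → ℝ}
    (hD : ∀ s : ℝ, D.eval (cexp (s * I)) = cexp (↑(ν * s) * I) * d s) {Z : Finset ℝ}
    (hZ : InjOn (fun s : ℝ ↦ cexp (s * I)) Z) (hZd : ∀ s ∈ Z, d s = 0)
    (hdeg : D.natDegree ≤ Z.card) {τ : ℝ} (hτ : d τ = 0) (hτ' : HasDerivAt d 0 τ) : D = 0 := by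
  classical
  refine eq_zero_of_isRoot_of_isRoot_derivative (z := cexp (τ * I))
    (S := Z.image fun s : ℝ ↦ cexp (s * I)) ?_ ?_ ?_ ?_
  · simp [IsRoot, hD, hτ]
  · rw [IsRoot, ← norm_eq_zero, norm_derivative_eval_exp_mul_I hD hτ', hτ]
    simp
  · simp only [Finset.mem_image]
    rintro _ ⟨s, hs, rfl⟩
    simp [IsRoot, hD, hZd s hs]
  · rwa [Finset.card_image_of_injOn hZ]

theorem exists_finset_zeros_of_alternating {n : ℕ} {d : ℝ → ℝ} (hd : Continuous d)
    {σ : ℕ → ℝ} (hσ : StrictMonoOn σ (Icc 1 (n + 1))) (hwrap : σ (n + 1) ≤ σ 1 + 2 * π)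
    (halt : ∀ j ∈ Icc 1 n, d (σ j) * d (σ (j + 1)) < 0) :
    ∃ Z : Finset ℝ, Z.card = n ∧ InjOn (fun s : ℝ ↦ cexp (s * I)) Z ∧ ∀ s ∈ Z, d s = 0 := by
  have mono : ∀ a b, 1 ≤ a → a ≤ b → b ≤ n + 1 → σ a ≤ σ b :=
    fun a b ha hab hb ↦ hσ.monotoneOn ⟨ha, by omega⟩ ⟨by omega, hb⟩ hab
  choose! c hc hcd using fun j (hj : j ∈ Icc 1 n) ↦ exists_mem_Ioo_eq_zero_of_mul_neg
    (mono j (j + 1) hj.1 j.le_succ (Nat.succ_le_succ hj.2)) hd.continuousOn (halt j hj)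
  have hcmono : StrictMonoOn c (Icc 1 n) := fun i hi j hj hij ↦ calc
    c i < σ (i + 1) := (hc i hi).2
    _ ≤ σ j := mono (i + 1) j (by omega) hij (hj.2.trans n.le_succ)
    _ < c j := (hc j hj).1
  have hcarc : ∀ j ∈ Icc 1 n, c j ∈ Ioc (σ 1) (σ 1 + 2 * π) := fun j hj ↦
    ⟨(mono 1 j le_rfl hj.1 (hj.2.trans n.le_succ)).trans_lt (hc j hj).1,
      ((hc j hj).2.trans_le (mono (j + 1) (n + 1) (by omega) (Nat.succ_le_succ hj.2) le_rfl)).le.trans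
        hwrap⟩
  refine ⟨(Finset.Icc 1 n).image c, ?_, ?_, ?_⟩
  · rw [Finset.card_image_of_injOn (by simpa using hcmono.injOn), Nat.card_Icc, Nat.add_sub_cancel]
  · refine Subtype.val_injective.comp_injOn
      ((Circle.exp_injOn_Ioc (add_sub_cancel_left (σ 1) _).le).mono ?_)
    simp only [Finset.coe_image, Finset.coe_Icc]
    exact image_subset_iff.mpr hcarc
  · simp only [Finset.mem_image, Finset.mem_Icc]
    rintro _ ⟨j, hj, rfl⟩
    exact hcd j hj

noncomputable def sinusoid (γ : ℂ) (ν τ s : ℝ) : ℝ := (γ * cexp (↑(ν * (s - τ)) * I)).re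

section sinusoid

variable (γ : ℂ) (ν τ : ℝ)

theorem abs_sinusoid_le (s : ℝ) : |sinusoid γ ν τ s| ≤ ‖γ‖ := by
  refine (abs_re_le_norm _).trans_eq ?_
  rw [norm_mul, norm_exp_ofReal_mul_I, mul_one]

theorem sinusoid_self : sinusoid γ ν τ τ = γ.re := by simp [sinusoid]

theorem continuous_sinusoid : Continuous (sinusoid γ ν τ) := by
  unfold sinusoid; fun_prop

theorem hasDerivAt_sinusoid_self : HasDerivAt (sinusoid γ ν τ) (-(ν * γ.im)) τ := by
  have h : HasDerivAt (fun z : ℂ ↦ γ * cexp (↑ν * (z - τ) * I)) (γ * (↑ν * I)) τ := by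
    have := ((((hasDerivAt_id (τ : ℂ)).sub_const (τ : ℂ)).const_mul (ν : ℂ)).mul_const I).cexp
      |>.const_mul γ
    simpa using this
  convert h.real_of_complex using 1
  · ext s; simp [sinusoid]
  · simp only [mul_re, mul_im, I_re, I_im, ofReal_re, ofReal_im]; ring

theorem exists_eval_exp_mul_I_eq_sinusoid (n : ℕ) :
    ∃ W : ℂ[X], W.natDegree ≤ n ∧
      ∀ s : ℝ, W.eval (cexp (s * I)) = cexp (↑(n / 2 * s) * I) * sinusoid γ (n / 2) τ s := by
  refine ⟨C (γ * cexp (↑(-(n / 2 * τ)) * I) / 2) * X ^ n + C (conj γ * cexp (↑(n / 2 * τ) * I) / 2),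
    ?_, fun s ↦ ?_⟩
  · exact (natDegree_add_le _ _).trans (max_le (natDegree_C_mul_X_pow_le _ _) (by simp))
  have e1 : cexp (↑(-(n / 2 * τ)) * I) * cexp (s * I) ^ n =
      cexp (↑(n / 2 * s) * I) * cexp (↑(n / 2 * (s - τ)) * I) := by
    rw [← Complex.exp_nat_mul, ← Complex.exp_add, ← Complex.exp_add]; congr 1; push_cast; ring
  have e2 : cexp (↑(n / 2 * τ) * I) =
      cexp (↑(n / 2 * s) * I) * cexp (-(↑(n / 2 * (s - τ)) * I)) := by
    rw [← Complex.exp_add]; congr 1; push_cast; ring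
  rw [sinusoid, re_eq_add_conj, map_mul, ← exp_conj, map_mul, conj_ofReal, conj_I]
  simp only [eval_add, eval_mul, eval_C, eval_pow, eval_X]
  rw [mul_div_right_comm γ, mul_assoc (γ / 2), e1, e2]
  ring_nf

end sinusoid

/-- `2 sin((s - t)/2)` is the signed length of the chord from `e^{it}` to `e^{is}`. -/
noncomputable def chordProd {ι : Type*} (S : Finset ι) (t : ι → ℝ) (s : ℝ) : ℝ :=
  ∏ j ∈ S, 2 * Real.sin ((s - t j) / 2)

section chordProd

variable {ι : Type*} (S : Finset ι) (t : ι → ℝ)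

theorem chordProd_add_two_pi (s : ℝ) :
    chordProd S t (s + 2 * π) = (-1) ^ S.card * chordProd S t s := by
  rw [chordProd, chordProd, ← Finset.prod_neg]
  refine Finset.prod_congr rfl fun j _ ↦ ?_
  rw [show (s + 2 * π - t j) / 2 = (s - t j) / 2 + π by ring, Real.sin_add_pi]
  ring

theorem chordProd_apply_eq_zero {j : ι} (hj : j ∈ S) : chordProd S t (t j) = 0 :=
  Finset.prod_eq_zero hj (by simp)

theorem differentiable_chordProd : Differentiable ℝ (chordProd S t) := by
  unfold chordProd
  fun_prop

theorem eval_prod_X_sub_C_exp_mul_I (s : ℝ) :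
    (∏ j ∈ S, (X - C (cexp (t j * I)))).eval (cexp (s * I)) =
      I ^ S.card * cexp (↑(∑ j ∈ S, t j / 2) * I) *
        (cexp (↑(S.card / 2 * s) * I) * chordProd S t s) := by
  simp_rw [eval_prod, eval_sub, eval_X, eval_C, exp_mul_I_sub_exp_mul_I, Finset.prod_mul_distrib,
    Finset.prod_const, chordProd, ofReal_prod, ← Complex.exp_sum, ← Finset.sum_mul, ← ofReal_sum]
  have hsum : ∑ j ∈ S, (s + t j) / 2 = ∑ j ∈ S, t j / 2 + S.card / 2 * s := by
    rw [← Finset.sum_div, ← Finset.sum_div, Finset.sum_add_distrib, Finset.sum_const, nsmul_eq_mul]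
    ring
  rw [hsum, ofReal_add, add_mul, Complex.exp_add]
  ring

theorem norm_eval_prod_X_sub_C_exp_mul_I (s : ℝ) :
    ‖(∏ j ∈ S, (X - C (cexp (t j * I)))).eval (cexp (s * I))‖ = |chordProd S t s| := by
  rw [eval_prod_X_sub_C_exp_mul_I, norm_mul, norm_mul, norm_mul, norm_pow, norm_I,
    norm_exp_ofReal_mul_I, norm_exp_ofReal_mul_I, norm_real, Real.norm_eq_abs, one_pow, one_mul,
    one_mul, one_mul]

theorem exists_eval_exp_mul_I_eq_chordProd :
    ∃ c : ℂ, ‖c‖ = 1 ∧ ∀ s : ℝ, (C c * ∏ j ∈ S, (X - C (cexp (t j * I)))).eval (cexp (s * I)) =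
      cexp (↑(S.card / 2 * s) * I) * chordProd S t s := by
  refine ⟨(I ^ S.card * cexp (↑(∑ j ∈ S, t j / 2) * I))⁻¹, by
    rw [norm_inv, norm_mul, norm_pow, norm_I, norm_exp_ofReal_mul_I, one_pow, one_mul, inv_one],
    fun s ↦ ?_⟩
  rw [eval_mul, eval_C, eval_prod_X_sub_C_exp_mul_I, inv_mul_cancel_left₀]
  exact mul_ne_zero (pow_ne_zero _ I_ne_zero) (Complex.exp_ne_zero _)

theorem norm_derivative_eval_prod_X_sub_C_exp_mul_I (τ : ℝ) :
    ‖(∏ j ∈ S, (X - C (cexp (t j * I)))).derivative.eval (cexp (τ * I))‖ =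
      √(deriv (chordProd S t) τ ^ 2 + (S.card / 2 * chordProd S t τ) ^ 2) := by
  obtain ⟨c, hc, hrep⟩ := exists_eval_exp_mul_I_eq_chordProd S t
  have := norm_derivative_eval_exp_mul_I hrep (differentiable_chordProd S t τ).hasDerivAt
  rwa [derivative_C_mul, eval_mul, eval_C, norm_mul, hc, one_mul] at this

theorem exists_eval_exp_mul_I_eq_chordProd_sub_sinusoid (γ : ℂ) (τ : ℝ) :
    ∃ D : ℂ[X], D.natDegree ≤ S.card ∧ ∀ s : ℝ, D.eval (cexp (s * I)) =
      cexp (↑(S.card / 2 * s) * I) * ↑(chordProd S t s - sinusoid γ (S.card / 2) τ s) := by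
  obtain ⟨c, -, hG⟩ := exists_eval_exp_mul_I_eq_chordProd S t
  obtain ⟨W, hWdeg, hW⟩ := exists_eval_exp_mul_I_eq_sinusoid γ τ S.card
  refine ⟨C c * ∏ j ∈ S, (X - C (cexp (t j * I))) - W, ?_, fun s ↦ ?_⟩
  · refine (natDegree_sub_le _ _).trans (max_le ((natDegree_C_mul_le _ _).trans ?_) hWdeg)
    rw [natDegree_finsetProd_X_sub_C_eq_card]
  · rw [eval_sub, hG, hW, ← mul_sub, ← ofReal_sub]

end chordProd

theorem neg_one_pow_mul_chordProd_pos {n j : ℕ} {t : ℕ → ℝ} (ht : MonotoneOn t (Icc 1 (n + 1)))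
    (hwrap : t (n + 1) ≤ t 1 + 2 * π) (hj : j ∈ Icc 1 n) {s : ℝ}
    (hs : s ∈ Ioo (t j) (t (j + 1))) :
    0 < (-1) ^ (n + j) * chordProd (Finset.Icc 1 n) t s := by
  obtain ⟨hj1, hjn⟩ := hj
  have mono : ∀ a b, 1 ≤ a → a ≤ b → b ≤ n + 1 → t a ≤ t b :=
    fun a b ha hab hb ↦ ht ⟨ha, by omega⟩ ⟨by omega, hb⟩ hab
  have hsign : (-1 : ℝ) ^ (n + j) = (-1) ^ (n - j) := by
    rw [show n + j = n - j + 2 * j by omega, pow_add, pow_mul]; simp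
  have hsplit : Finset.Icc 1 n = Finset.Ioc 0 n := rfl
  rw [chordProd, hsign, hsplit, ← Finset.prod_Ioc_consecutive _ (Nat.zero_le j) hjn,
    mul_left_comm, ← Nat.card_Ioc j n, ← Finset.prod_neg]
  -- the factors with `k ≤ j` are positive, the `n - j` others negative
  refine mul_pos (Finset.prod_pos fun k hk ↦ ?_) (Finset.prod_pos fun k hk ↦ ?_)
  · obtain ⟨hk0, hkj⟩ := Finset.mem_Ioc.mp hk
    have h1 := mono k j (by omega) hkj (by omega)
    have h2 := mono 1 k le_rfl (by omega) (by omega)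
    have h3 := mono (j + 1) (n + 1) (by omega) (by omega) le_rfl
    have := Real.sin_pos_of_pos_of_lt_pi (x := (s - t k) / 2) (by linarith [hs.1])
      (by linarith [hs.2])
    linarith
  · obtain ⟨hjk, hkn⟩ := Finset.mem_Ioc.mp hk
    have h1 := mono (j + 1) k (by omega) hjk (by omega)
    have h2 := mono k (n + 1) (by omega) (by omega) le_rfl
    have h3 := mono 1 j le_rfl hj1 (by omega)
    have := Real.sin_neg_of_neg_of_neg_pi_lt (x := (s - t k) / 2) (by linarith [hs.2])
      (by linarith [hs.1])
    linarith

theorem mem_Ioo_and_le_neg_one_pow_mul_chordProd {n j : ℕ} (hn : 1 ≤ n) {t : ℕ → ℝ}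
    (ht : MonotoneOn t (Icc 1 (n + 1))) (hwrap : t (n + 1) = t 1 + 2 * π) {m : ℝ} (hm0 : 0 < m)
    (hj : j ∈ Icc 1 n) {s : ℝ} (hs : s ∈ Icc (t j) (t (j + 1)))
    (hms : m ≤ |chordProd (Finset.Icc 1 n) t s|) :
    s ∈ Ioo (t j) (t (j + 1)) ∧ m ≤ (-1) ^ (n + j) * chordProd (Finset.Icc 1 n) t s := by
  obtain ⟨hj1, hjn⟩ := hj
  have hgs : chordProd (Finset.Icc 1 n) t s ≠ 0 := abs_pos.mp (hm0.trans_le hms)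
  have hzero : ∀ k, 1 ≤ k → k ≤ n → chordProd (Finset.Icc 1 n) t (t k) = 0 :=
    fun k hk1 hkn ↦ chordProd_apply_eq_zero _ _ (Finset.mem_Icc.2 ⟨hk1, hkn⟩)
  have hzero_succ : chordProd (Finset.Icc 1 n) t (t (j + 1)) = 0 := by
    rcases hjn.lt_or_eq with h | rfl
    · exact hzero (j + 1) (by omega) h
    · rw [hwrap, chordProd_add_two_pi, hzero 1 le_rfl hn, mul_zero]
  have hs' : s ∈ Ioo (t j) (t (j + 1)) :=
    ⟨hs.1.lt_of_ne (by rintro rfl; exact hgs (hzero j hj1 hjn)),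
      hs.2.lt_of_ne (by rintro rfl; exact hgs hzero_succ)⟩
  refine ⟨hs', ?_⟩
  have hpos := neg_one_pow_mul_chordProd_pos ht hwrap.le ⟨hj1, hjn⟩ hs'
  rwa [← abs_of_pos hpos, abs_mul, abs_pow, abs_neg, abs_one, one_pow, one_mul]

theorem exists_alternating_peaks {n : ℕ} (hn : 1 ≤ n) {t : ℕ → ℝ}
    (ht : MonotoneOn t (Icc 1 (n + 1))) (hwrap : t (n + 1) = t 1 + 2 * π) {m : ℝ} (hm0 : 0 < m)
    (hm : ∀ j ∈ Icc 1 n, ∃ s ∈ Icc (t j) (t (j + 1)), m ≤ |chordProd (Finset.Icc 1 n) t s|) :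
    ∃ σ : ℕ → ℝ, StrictMonoOn σ (Icc 1 (n + 1)) ∧ σ (n + 1) = σ 1 + 2 * π ∧
      ∀ j ∈ Icc 1 (n + 1), m ≤ (-1) ^ (n + j) * chordProd (Finset.Icc 1 n) t (σ j) := by
  choose! s hs hms using hm
  replace hs := fun j hj ↦
    mem_Ioo_and_le_neg_one_pow_mul_chordProd hn ht hwrap hm0 hj (hs j hj) (hms j hj)
  refine ⟨fun j ↦ if j ≤ n then s j else s 1 + 2 * π, ?_, by simp [hn], ?_⟩
  · refine strictMonoOn_of_lt_succ ordConnected_Icc fun a _ ha ha' ↦ ?_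
    rw [Order.succ_eq_add_one] at ha' ⊢
    obtain ⟨⟨ha1, -⟩, ⟨-, han⟩⟩ := And.intro ha ha'
    rcases (show a < n ∨ a = n by omega) with h | rfl
    · simp only [if_pos h.le, if_pos (show a + 1 ≤ n by omega)]
      exact (hs a ⟨ha1, h.le⟩).1.2.trans (hs (a + 1) ⟨by omega, h⟩).1.1
    · simp only [le_refl, if_true, show ¬a + 1 ≤ a by omega, if_false]
      linarith [(hs a ⟨ha1, le_rfl⟩).1.2, (hs 1 ⟨le_rfl, hn⟩).1.1]
  · rintro j ⟨hj1, hjn⟩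
    rcases hjn.lt_or_eq with hj | rfl
    · simp only [if_pos (Nat.lt_succ_iff.mp hj)]
      exact (hs j ⟨hj1, by omega⟩).2
    · simp only [show ¬n + 1 ≤ n by omega, if_false]
      rw [chordProd_add_two_pi, Nat.card_Icc, Nat.add_sub_cancel, ← mul_assoc, ← pow_add,
        show n + (n + 1) + n = n + 1 + 2 * n by ring, pow_add, pow_mul, neg_one_sq, one_pow,
        mul_one]
      exact (hs 1 ⟨le_rfl, hn⟩).2

theorem not_hasDerivAt_chordProd_sub_sinusoid {n : ℕ} (hn : 1 ≤ n) {t : ℕ → ℝ}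
    (ht : MonotoneOn t (Icc 1 (n + 1))) (hwrap : t (n + 1) = t 1 + 2 * π) {m : ℝ}
    (hm : ∀ j ∈ Icc 1 n, ∃ s ∈ Icc (t j) (t (j + 1)), m ≤ |chordProd (Finset.Icc 1 n) t s|)
    {γ : ℂ} (hγ : ‖γ‖ < m) {τ : ℝ} (hτ : chordProd (Finset.Icc 1 n) t τ = γ.re) :
    ¬HasDerivAt (fun s ↦ chordProd (Finset.Icc 1 n) t s - sinusoid γ (n / 2) τ s) 0 τ := by
  intro hτ'
  set d := fun s ↦ chordProd (Finset.Icc 1 n) t s - sinusoid γ (n / 2) τ s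
  obtain ⟨σ, hσ, hσwrap, hσg⟩ :=
    exists_alternating_peaks hn ht hwrap ((norm_nonneg γ).trans_lt hγ) hm
  have hdσ : ∀ j ∈ Icc 1 (n + 1), 0 < (-1) ^ (n + j) * d (σ j) := fun j hj ↦ by
    have hw : (-1) ^ (n + j) * sinusoid γ (n / 2) τ (σ j) < m := by
      refine ((le_abs_self _).trans_eq ?_).trans_lt
        ((abs_sinusoid_le γ (n / 2) τ (σ j)).trans_lt hγ)
      rw [abs_mul, abs_pow, abs_neg, abs_one, one_pow, one_mul]
    linarith [hσg j hj, mul_sub ((-1 : ℝ) ^ (n + j)) (chordProd (Finset.Icc 1 n) t (σ j))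
      (sinusoid γ (n / 2) τ (σ j))]
  have halt : ∀ j ∈ Icc 1 n, d (σ j) * d (σ (j + 1)) < 0 := fun j ⟨hj1, hjn⟩ ↦ by
    have hsign : (-1 : ℝ) ^ (n + j) * (-1) ^ (n + (j + 1)) = -1 := by
      rw [← pow_add, show n + j + (n + (j + 1)) = 2 * (n + j) + 1 by ring, pow_succ, pow_mul]
      simp
    have := mul_pos (hdσ j ⟨hj1, by omega⟩) (hdσ (j + 1) ⟨by omega, by omega⟩)
    linear_combination this + d (σ j) * d (σ (j + 1)) * hsign
  obtain ⟨Z, hZn, hZ, hZd⟩ := exists_finset_zeros_of_alternating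
    ((differentiable_chordProd _ t).continuous.sub (continuous_sinusoid _ _ _)) hσ hσwrap.le halt
  obtain ⟨D, hDdeg, hD⟩ := exists_eval_exp_mul_I_eq_chordProd_sub_sinusoid (Finset.Icc 1 n) t γ τ
  simp only [Nat.card_Icc, Nat.add_sub_cancel] at hDdeg hD
  have hD0 := eq_zero_of_double_zero_on_circle (d := d) hD hZ hZd (hZn ▸ hDdeg)
    (by simp [d, hτ, sinusoid_self]) hτ'
  have hd1 : d (σ 1) = 0 := by
    simpa [hD0, Complex.exp_ne_zero, ← ofReal_sub] using hD (σ 1)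
  simpa [hd1] using hdσ 1 ⟨le_rfl, by omega⟩

theorem inverse_bernstein_chordProd {n : ℕ} (hn : 1 ≤ n) {t : ℕ → ℝ}
    (ht : MonotoneOn t (Icc 1 (n + 1))) (hwrap : t (n + 1) = t 1 + 2 * π) {m : ℝ} (hm0 : 0 ≤ m)
    (hm : ∀ j ∈ Icc 1 n, ∃ s ∈ Icc (t j) (t (j + 1)), m ≤ |chordProd (Finset.Icc 1 n) t s|)
    (τ : ℝ) :
    (n / 2 * m) ^ 2 ≤
      deriv (chordProd (Finset.Icc 1 n) t) τ ^ 2 +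
        (n / 2 * chordProd (Finset.Icc 1 n) t τ) ^ 2 := by
  set g := chordProd (Finset.Icc 1 n) t
  set ν : ℝ := n / 2
  have hν : 0 < ν := by positivity
  by_contra! h
  set γ : ℂ := ⟨g τ, -(deriv g τ / ν)⟩
  have hγ : ‖γ‖ < m := by
    have e : ν ^ 2 * ‖γ‖ ^ 2 = deriv g τ ^ 2 + (ν * g τ) ^ 2 := by
      rw [Complex.sq_norm, Complex.normSq_mk]; field_simp; ring
    refine (pow_lt_pow_iff_left₀ (norm_nonneg _) hm0 two_ne_zero).mp
      (lt_of_mul_lt_mul_left ?_ (sq_nonneg ν))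
    rw [e, ← mul_pow]; exact h
  refine not_hasDerivAt_chordProd_sub_sinusoid hn ht hwrap hm hγ rfl
    (((differentiable_chordProd _ t τ).hasDerivAt.sub
      (hasDerivAt_sinusoid_self γ ν τ)).congr_deriv ?_)
  rw [show γ.im = -(deriv g τ / ν) from rfl]
  field_simp
  ring

/-- Khrushchev's inverse Bernstein-type inequality. -/
theorem inverse_bernstein (n : ℕ) (hn : 1 ≤ n) (t : ℕ → ℝ)
    (h0 : 0 ≤ t 1) (hmono : StrictMonoOn t (Set.Icc 1 n)) (hlast : t n < 2 * Real.pi)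
    (hwrap : t (n + 1) = t 1 + 2 * Real.pi)
    (P : ℂ → ℂ)
    (hP : P = fun z => ∏ j ∈ Finset.Icc 1 n, (z - Complex.exp (t j * Complex.I)))
    (m : ℝ)
    (hm : m = (Finset.Icc 1 n).inf' (Finset.nonempty_Icc.mpr hn)
      (fun j => sSup ((fun s : ℝ => ‖P (Complex.exp (s * Complex.I))‖) ''
        Set.Icc (t j) (t (j + 1))))) :
    ∀ z : ℂ, ‖z‖ = 1 →
      ((n : ℝ) / 2) ^ 2 * (‖P z‖ ^ 2 + max (m ^ 2 - ‖P z‖ ^ 2) 0)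
          ≤ ‖deriv P z‖ ^ 2 ∧
      (n : ℝ) * m / 2 ≤ ‖deriv P z‖ := by
  set g := chordProd (Finset.Icc 1 n) t
  set p : ℂ[X] := ∏ j ∈ Finset.Icc 1 n, (X - C (cexp (t j * I)))
  have hPp : P = fun z ↦ p.eval z := by rw [hP]; ext z; simp [p, eval_prod]
  have hPg : (fun s : ℝ ↦ ‖P (cexp (s * I))‖) = fun s ↦ |g s| := by
    rw [hPp]; ext s; exact norm_eval_prod_X_sub_C_exp_mul_I _ t s
  have ht : MonotoneOn t (Icc 1 (n + 1)) := monotoneOn_Icc_add_one hmono.monotoneOn (by linarith)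
  rw [hPg] at hm
  have hm0 : 0 ≤ m := hm ▸ Finset.le_inf' _ _ fun j _ ↦
    Real.sSup_nonneg (by rintro _ ⟨s, -, rfl⟩; exact abs_nonneg _)
  have hmpeak : ∀ j ∈ Icc 1 n, ∃ s ∈ Icc (t j) (t (j + 1)), m ≤ |g s| := fun j hj ↦
    hm ▸ exists_mem_Icc_inf'_sSup_image_le _ (differentiable_chordProd _ t).continuous.abs
      (fun k hk ↦ by
        simp only [Finset.mem_Icc] at hk
        exact ht ⟨hk.1, by omega⟩ ⟨by omega, by omega⟩ k.le_succ) (Finset.mem_Icc.2 hj)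
  intro z hz
  obtain ⟨τ, rfl⟩ : ∃ τ : ℝ, cexp (τ * I) = z :=
    ⟨arg z, by simpa [hz] using norm_mul_exp_arg_mul_I z⟩
  have hP' : ‖deriv P (cexp (τ * I))‖ = √(deriv g τ ^ 2 + (n / 2 * g τ) ^ 2) := by
    rw [hPp, Polynomial.deriv, norm_derivative_eval_prod_X_sub_C_exp_mul_I, Nat.card_Icc,
      Nat.add_sub_cancel]
  have key := inverse_bernstein_chordProd hn ht hwrap hm0 hmpeak τ
  rw [hP', congrFun hPg τ, sq_abs, Real.sq_sqrt (by positivity)]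
  refine ⟨?_, Real.le_sqrt_of_sq_le (by linarith)⟩
  rcases le_total (m ^ 2 - g τ ^ 2) 0 with h | h
  · rw [max_eq_right h]; nlinarith [sq_nonneg (deriv g τ)]
  · rw [max_eq_left h]; linarith
end

section
/- Let P(z) = ∏_{j=1}^n (z - e^{i t_j}) and write P(e^{it}) = R(t) e^{iφ(t)} where R(t) = |P(e^{it})|. Then for every t such that e^{it} is not a zero of P, |P'(e^{it})|² = R'(t)² + (n/2)² R(t)². -/
/-!
Write `z = e^{is}` and `A = z P'(z) / P(z) = ∑ⱼ z / (z - e^{itⱼ})`. Each summand has real part `1/2`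
because `z` and `e^{itⱼ}` lie on the unit circle, so `Re A = n/2`. Differentiating
`u ↦ P(e^{iu})` gives `i A P(z)`, hence `R'(s) = Re(i A) R(s) = -(Im A) R(s)`, while
`|P'(z)| = |A| R(s)`; the identity is `|A|² = (Re A)² + (Im A)²`.
-/

open Complex
open scoped ComplexConjugate

theorem re_div_sub_eq_half {z w : ℂ} (hz : ‖z‖ = 1) (hw : ‖w‖ = 1) (hzw : z ≠ w) :
    (z / (z - w)).re = 1 / 2 := by
  have hz0 : z ≠ 0 := norm_ne_zero_iff.mp (by rw [hz]; exact one_ne_zero)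
  have hw0 : w ≠ 0 := norm_ne_zero_iff.mp (by rw [hw]; exact one_ne_zero)
  have hsub : z - w ≠ 0 := sub_ne_zero.mpr hzw
  have hsub' : w - z ≠ 0 := sub_ne_zero.mpr hzw.symm
  -- conjugation is inversion on the unit circle, so `conj (z / (z - w)) = w / (w - z)`
  have hconj : conj (z / (z - w)) = w / (w - z) := by
    rw [map_div₀, map_sub, ← inv_eq_conj hz, ← inv_eq_conj hw]
    field_simp
  have hsum : z / (z - w) + conj (z / (z - w)) = 1 := by
    rw [hconj]
    field_simp
    ring
  have := congrArg re hsum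
  rw [add_re, conj_re, one_re] at this
  linarith

theorem logDeriv_prod_sub {ι : Type*} (s : Finset ι) (w : ι → ℂ) {z : ℂ}
    (hz : ∀ i ∈ s, z ≠ w i) :
    logDeriv (fun x => ∏ i ∈ s, (x - w i)) z = ∑ i ∈ s, (z - w i)⁻¹ := by
  rw [logDeriv_prod (fun i hi => sub_ne_zero.mpr (hz i hi)) (fun i _ => by fun_prop)]
  refine Finset.sum_congr rfl fun i _ => ?_
  simp [logDeriv_apply]

theorem HasDerivAt.norm_of_eq_mul {f : ℝ → ℂ} {c : ℂ} {s : ℝ} (hf : HasDerivAt f (c * f s) s)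
    (hs : f s ≠ 0) : HasDerivAt (fun u => ‖f u‖) (c.re * ‖f s‖) s := by
  have hsq : HasDerivAt (fun u => ‖f u‖ ^ 2) (2 * c.re * ‖f s‖ ^ 2) s := by
    convert hf.norm_sq using 1
    rw [Complex.inner, mul_assoc c, mul_conj, re_mul_ofReal, normSq_eq_norm_sq]
    ring
  have hpos : ‖f s‖ ^ 2 ≠ 0 := by positivity
  convert hsq.sqrt hpos using 1
  · simp only [Real.sqrt_sq (norm_nonneg _)]
  · rw [Real.sqrt_sq (norm_nonneg _)]
    field_simp

theorem DifferentiableAt.hasDerivAt_comp_exp_ofReal_mul_I {f : ℂ → ℂ} {s : ℝ}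
    (hf : DifferentiableAt ℂ f (cexp ((s : ℂ) * I))) :
    HasDerivAt (fun u : ℝ => f (cexp (u * I))) (I * cexp (s * I) * deriv f (cexp (s * I))) s := by
  have hexp : HasDerivAt (fun w : ℂ => cexp (w * I)) (cexp (s * I) * I) (s : ℂ) :=
    ((hasDerivAt_id (s : ℂ)).mul_const I).cexp.congr_deriv (by simp)
  exact (hf.hasDerivAt.comp (s : ℂ) hexp).comp_ofReal.congr_deriv (by ring)

/-- `|P'(e^{it})|² = R'(t)² + (n/2)² R(t)²` where `R(t) = |P(e^{it})|`. -/
theorem abs_deriv_sq_eq (n : ℕ) (t : Fin n → ℝ) (P : ℂ → ℂ)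
    (hP : P = fun z => ∏ j, (z - Complex.exp (t j * Complex.I)))
    (R : ℝ → ℝ) (hR : R = fun u : ℝ => ‖P (Complex.exp (u * Complex.I))‖)
    (s : ℝ) (hs : P (Complex.exp (s * Complex.I)) ≠ 0) :
    ‖deriv P (Complex.exp (s * Complex.I))‖ ^ 2
      = (deriv R s) ^ 2 + ((n : ℝ) / 2) ^ 2 * (R s) ^ 2 := by
  set z := cexp (s * I)
  have hz : ‖z‖ = 1 := norm_exp_ofReal_mul_I s
  have hzw : ∀ j ∈ Finset.univ, z ≠ cexp (t j * I) := fun j _ h =>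
    hs (by rw [hP]; exact Finset.prod_eq_zero (Finset.mem_univ j) (sub_eq_zero.mpr h))
  set A := z * logDeriv P z
  have hA_re : A.re = n / 2 := by
    simp only [A, hP, logDeriv_prod_sub _ _ hzw, Finset.mul_sum, ← div_eq_mul_inv, re_sum]
    rw [Finset.sum_congr rfl fun j hj =>
      re_div_sub_eq_half hz (norm_exp_ofReal_mul_I (t j)) (hzw j hj)]
    simp [div_eq_mul_inv]
  have hzP' : z * deriv P z = A * P z := by
    simp only [A, logDeriv_apply]
    field_simp
  have hR' : HasDerivAt R (-A.im * R s) s := by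
    have hP_diff : DifferentiableAt ℂ P z := by rw [hP]; fun_prop
    have hf := hP_diff.hasDerivAt_comp_exp_ofReal_mul_I
    rw [mul_assoc, hzP', ← mul_assoc] at hf
    simpa [hR] using hf.norm_of_eq_mul hs
  have hP'_norm : ‖deriv P z‖ = ‖A‖ * R s := by
    simpa [hz, hR] using congrArg norm hzP'
  rw [hR'.deriv, hP'_norm, mul_pow, Complex.sq_norm, normSq_apply, hA_re]
  ring
end

section
/- Suppose P is a monic polynomial of degree n all of whose zeros lie on the unit circle and |P'(z)| > n for all z on the unit circle. Then a contradiction follows; equivalently, every monic degree-n polynomial with all zeros on the unit circle satisfies min_{|z|=1} |P'(z)| ≤ n. -/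
/-!
By Gauss–Lucas the zeros of `P'` lie in the closed unit disk. If one lies on the circle we are
done. Otherwise `z ^ (n - 1) P'(1 / z)` has no zeros in the closed disk and equals `n`, the leading
coefficient of `P'`, at `0`; by the minimum modulus principle its modulus is at most `n` somewhere
on the circle, where it coincides with `|P'(1 / z)|`.
-/

open Polynomial Metric

namespace Complex

variable {E : Type*} [NormedAddCommGroup E] [NormedSpace ℂ E] [Nontrivial E] [FiniteDimensional ℂ E]

theorem exists_mem_frontier_isMinOn_norm {f : E → ℂ} {U : Set E} (hb : Bornology.IsBounded U)
    (hne : U.Nonempty) (hd : DiffContOnCl ℂ f U) (hf : ∀ z ∈ closure U, f z ≠ 0) :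
    ∃ z ∈ frontier U, IsMinOn (norm ∘ f) (closure U) z := by
  obtain ⟨z, hz, hmax⟩ := exists_mem_frontier_isMaxOn_norm hb hne (hd.inv hf)
  refine ⟨z, hz, fun w hw => ?_⟩
  have hzU : z ∈ closure U := frontier_subset_closure hz
  simpa [norm_inv, inv_le_inv₀ (norm_pos_iff.2 (hf w hw)) (norm_pos_iff.2 (hf z hzU))] using hmax hw

end Complex

namespace Polynomial

theorem rootSet_derivative_subset_of_convex {P : ℂ[X]} {s : Set ℂ} (hs : Convex ℝ s)
    (h : P.rootSet ℂ ⊆ s) :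
    P.derivative.rootSet ℂ ⊆ s := by
  rcases le_or_gt P.degree 0 with hP | hP
  · simp [derivative_eq_zero.2 (natDegree_eq_zero_iff_degree_le_zero.2 hP)]
  · exact (rootSet_derivative_subset_convexHull_rootSet hP).trans (convexHull_min h hs)

theorem eval_inv_mul_pow_natDegree {K : Type*} [Field K] (q : K[X]) {u : K} (hu : u ≠ 0) :
    q.eval u⁻¹ * u ^ q.natDegree = q.reverse.eval u := by
  let _ : Invertible u⁻¹ := invertibleOfNonzero (inv_ne_zero hu)
  have h := eval₂_reverse_mul_pow (RingHom.id K) u⁻¹ q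
  rw [invOf_eq_inv, inv_inv] at h
  rw [eval, eval, ← h, mul_assoc, ← mul_pow, inv_mul_cancel₀ hu, one_pow, mul_one]

theorem exists_norm_eq_one_norm_eval_le_leadingCoeff {q : ℂ[X]}
    (hq : q.rootSet ℂ ⊆ closedBall 0 1) : ∃ z : ℂ, ‖z‖ = 1 ∧ ‖q.eval z‖ ≤ ‖q.leadingCoeff‖ := by
  by_cases hcircle : ∃ z : ℂ, ‖z‖ = 1 ∧ q.eval z = 0
  · obtain ⟨z, hz, hqz⟩ := hcircle
    exact ⟨z, hz, by simp [hqz]⟩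
  push Not at hcircle
  have hq0 : q ≠ 0 := fun h => hcircle 1 norm_one (by simp [h])
  have hroot_lt : ∀ z : ℂ, q.eval z = 0 → ‖z‖ < 1 := fun z hz =>
    (mem_closedBall_zero_iff.1 (hq ((mem_rootSet.2 ⟨hq0, by simpa using hz⟩)))).lt_of_ne
      fun h => hcircle z h hz
  -- `q.reverse` is `u ^ d * q (1 / u)`, so its zeros are the inverses of those of `q`
  have hrev : ∀ u ∈ closure (ball (0 : ℂ) 1), q.reverse.eval u ≠ 0 := by
    intro u hu
    rw [closure_ball 0 one_ne_zero, mem_closedBall_zero_iff] at hu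
    rcases eq_or_ne u 0 with rfl | hu0
    · simpa [← coeff_zero_eq_eval_zero] using hq0
    rw [← eval_inv_mul_pow_natDegree q hu0]
    refine mul_ne_zero (fun h => (hroot_lt _ h).not_ge ?_) (pow_ne_zero _ hu0)
    rw [norm_inv]
    exact one_le_inv₀ (norm_pos_iff.2 hu0) |>.2 hu
  obtain ⟨u, hu, hmin⟩ := Complex.exists_mem_frontier_isMinOn_norm isBounded_ball
    ⟨0, mem_ball_self one_pos⟩ q.reverse.differentiable.diffContOnCl hrev
  rw [frontier_ball 0 one_ne_zero, mem_sphere_zero_iff_norm] at hu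
  have hu0 : u ≠ 0 := norm_ne_zero_iff.1 (by simp [hu])
  refine ⟨u⁻¹, by simp [hu], ?_⟩
  have := hmin (subset_closure (mem_ball_self one_pos))
  simpa [← eval_inv_mul_pow_natDegree q hu0, hu, ← coeff_zero_eq_eval_zero] using this

theorem exists_norm_eq_one_norm_eval_derivative_le_natDegree {p : ℂ[X]} (hp : p.Monic)
    (hroots : p.rootSet ℂ ⊆ closedBall 0 1) :
    ∃ z : ℂ, ‖z‖ = 1 ∧ ‖p.derivative.eval z‖ ≤ p.natDegree := by
  simpa [hp.leadingCoeff] using exists_norm_eq_one_norm_eval_le_leadingCoeff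
    (rootSet_derivative_subset_of_convex (convex_closedBall 0 1) hroots)

end Polynomial

theorem exists_deriv_le_general (n : ℕ) (t : Fin n → ℝ) (P : ℂ → ℂ)
    (hP : P = fun z => ∏ j, (z - Complex.exp (t j * Complex.I))) :
    ∃ z : ℂ, ‖z‖ = 1 ∧ ‖deriv P z‖ ≤ n := by
  set p : ℂ[X] := ∏ j, (X - C (Complex.exp (t j * Complex.I)))
  have hPp : P = fun z => p.eval z := by simp [hP, p, eval_prod]
  have hmonic : p.Monic := monic_prod_of_monic _ _ fun j _ => monic_X_sub_C _
  have hdeg : p.natDegree = n := by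
    rw [natDegree_prod_of_monic _ _ fun j _ => monic_X_sub_C _]
    simp
  have hroots : p.rootSet ℂ ⊆ closedBall 0 1 := by
    intro z hz
    obtain ⟨j, -, hj⟩ :=
      Finset.prod_eq_zero_iff.1 (by simpa [p, eval_prod] using (mem_rootSet.1 hz).2)
    simp [sub_eq_zero.1 hj, Complex.norm_exp_ofReal_mul_I]
  obtain ⟨z, hz, hle⟩ := exists_norm_eq_one_norm_eval_derivative_le_natDegree hmonic hroots
  exact ⟨z, hz, by simpa [hPp, Polynomial.deriv, hdeg] using hle⟩

/-- Every monic degree-`n` polynomial with all zeros on the unit circle satisfies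
`min_{|z|=1} |P'(z)| ≤ n`. -/
theorem exists_deriv_le (n : ℕ) (hn : 1 ≤ n) (t : Fin n → ℝ) (P : ℂ → ℂ)
    (hP : P = fun z => ∏ j, (z - Complex.exp (t j * Complex.I))) :
    ∃ z : ℂ, ‖z‖ = 1 ∧ ‖deriv P z‖ ≤ n :=
  exists_deriv_le_general n t P hP
end

section
/- Let P be a monic polynomial of degree n with all zeros on the unit circle such that |P'(z)| = n for all z with |z| ≥ 1 (in the sense that f(z) = P'(z)/z^{n-1} has constant modulus n on and outside the unit circle). Then P(z) = z^n - c for some c with |c| = 1; i.e., the zeros of P are n equally spaced points on the unit circle. -/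
/-!
With `p = ∏ (X - exp (t j * I))`, the hypothesis says that `p'` has modulus `n` on the unit
circle. The reverse of `p'` then has modulus `n` on the circle and takes the value `n`, the
leading coefficient of `p'`, at the origin; by the maximum modulus principle it is constant.
Hence `p' = n X^(n-1)`, so `p = X^n + p(0)`, and `|p(0)| = ∏ |exp (t j * I)| = 1`.
-/

open Complex Polynomial Metric

namespace Polynomial

theorem eval_reverse {K : Type*} [Field K] (p : K[X]) {x : K} (hx : x ≠ 0) :
    p.reverse.eval x = p.eval x⁻¹ * x ^ p.natDegree := by
  let _ : Invertible x⁻¹ := invertibleOfNonzero (inv_ne_zero hx)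
  have h := eval₂_reverse_mul_pow (RingHom.id K) x⁻¹ p
  rw [invOf_eq_inv, inv_inv] at h
  rw [← eval₂_id, ← eval₂_id, ← h, mul_assoc, ← mul_pow, inv_mul_cancel₀ hx, one_pow, mul_one]

theorem eq_C_mul_X_pow_of_norm_eval_eq_leadingCoeff (p : ℂ[X])
    (h : ∀ z : ℂ, ‖z‖ = 1 → ‖p.eval z‖ = ‖p.leadingCoeff‖) :
    p = C p.leadingCoeff * X ^ p.natDegree := by
  set r := p.reverse
  have hr0 : r.eval 0 = p.leadingCoeff := by
    rw [← coeff_zero_eq_eval_zero, coeff_zero_reverse]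
  have hfrontier : ∀ w ∈ frontier (ball (0 : ℂ) 1), ‖r.eval w‖ ≤ ‖p.leadingCoeff‖ := by
    intro w hw
    rw [frontier_ball 0 one_ne_zero, mem_sphere_zero_iff_norm] at hw
    rw [eval_reverse p (norm_ne_zero_iff.mp (hw.trans_ne one_ne_zero)), norm_mul,
      h _ (by rw [norm_inv, hw, inv_one]), norm_pow, hw, one_pow, mul_one]
  have hmax : IsMaxOn (‖r.eval ·‖) (ball (0 : ℂ) 1) 0 := fun w hw => by
    simpa [hr0] using Complex.norm_le_of_forall_mem_frontier_norm_le isBounded_ball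
      r.differentiable.diffContOnCl hfrontier (subset_closure hw)
  have hconst : Set.EqOn r.eval (Function.const ℂ p.leadingCoeff) (ball 0 1) := by
    simpa [hr0] using Complex.eq_const_of_exists_max r.differentiable.differentiableOn
      (mem_ball_self one_pos) hmax
  have hr : r = C p.leadingCoeff := eq_of_infinite_eval_eq _ _ <|
    (infinite_of_mem_nhds 0 (ball_mem_nhds 0 one_pos)).mono fun w hw => by simpa using hconst hw
  calc p = reflect p.natDegree r := reflect_reflect.symm
    _ = C p.leadingCoeff * X ^ p.natDegree := by rw [hr, reflect_C]

theorem eq_X_pow_add_C_of_derivative_eq {R : Type*} [Ring R] [IsAddTorsionFree R] {p : R[X]}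
    {n : ℕ} (hn : n ≠ 0) (h : derivative p = derivative (X ^ n)) :
    p = X ^ n + C (p.coeff 0) := by
  have hconst := eq_C_of_derivative_eq_zero (p := p - X ^ n) (by rw [derivative_sub, h, sub_self])
  rw [coeff_sub, coeff_X_pow, if_neg hn.symm, sub_zero] at hconst
  exact eq_add_of_sub_eq' hconst

end Polynomial

/-- If `P` is monic with all zeros on the unit circle and `|P'(z)/z^{n-1}| = n` for all
`|z| ≥ 1`, then `P(z) = z^n - c` with `|c| = 1`. -/
theorem eq_zpow_sub_const (n : ℕ) (hn : 1 ≤ n) (t : Fin n → ℝ) (P : ℂ → ℂ)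
    (hP : P = fun z => ∏ j, (z - Complex.exp (t j * Complex.I)))
    (hf : ∀ z : ℂ, 1 ≤ ‖z‖ → ‖deriv P z / z ^ (n - 1)‖ = n) :
    ∃ c : ℂ, ‖c‖ = 1 ∧ ∀ z : ℂ, P z = z ^ n - c := by
  set p : ℂ[X] := ∏ j, (X - C (exp (t j * I)))
  have hPp : P = fun z => p.eval z := by simp [hP, p, eval_prod]
  have hmonic : p.Monic := monic_prod_of_monic _ _ fun j _ => monic_X_sub_C _
  have hdeg : p.natDegree = n := by
    rw [natDegree_prod_of_monic _ _ fun j _ => monic_X_sub_C _]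
    simp
  have hderiv : derivative p = derivative (X ^ n) := by
    rw [derivative_X_pow]
    simpa [hmonic.leadingCoeff, hdeg] using
      eq_C_mul_X_pow_of_norm_eval_eq_leadingCoeff (derivative p) fun z hz => by
        simpa [hPp, Polynomial.deriv, hz, hmonic.leadingCoeff, hdeg] using hf z hz.ge
  have hp0 : ‖p.coeff 0‖ = 1 := by
    simp [coeff_zero_eq_eval_zero, p, eval_prod, norm_exp_ofReal_mul_I]
  refine ⟨-p.coeff 0, by rwa [norm_neg], fun z => ?_⟩
  conv_lhs => rw [hPp, eq_X_pow_add_C_of_derivative_eq (by omega) hderiv]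
  simp
end

section
/- Let g : ℝ → (0, ∞] be even, 2π-periodic, non-increasing and strictly convex on (0, π]. Fix t_1 < t_2 with t_2 - t_1 < 2π. Then for sufficiently small Δ > 0 and all t ∈ (t_1, t_2), g(t - (t_1 - Δ)) + g(t - (t_2 + Δ)) < g(t - t_1) + g(t - t_2); i.e., moving two points symmetrically away from an interval strictly decreases the two-point potential on that interval. -/
open Real Set ENNReal

/-- Nonstrict midpoint convexity from strict midpoint convexity. -/
private lemma convle (F : ℝ → ℝ)
    (hconv : ∀ x ∈ Set.Ioc (0:ℝ) Real.pi, ∀ y ∈ Set.Ioc (0:ℝ) Real.pi, x ≠ y →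
      F ((x + y) / 2) < (F x + F y) / 2) :
    ∀ x ∈ Set.Ioc (0:ℝ) Real.pi, ∀ y ∈ Set.Ioc (0:ℝ) Real.pi,
      F ((x + y) / 2) ≤ (F x + F y) / 2 := by
  intro x hx y hy
  rcases eq_or_ne x y with rfl | h
  · rw [show (x + x) / 2 = x by ring]; linarith
  · exact (hconv x hx y hy h).le

/-- Strict antitonicity from antitonicity plus strict midpoint convexity. -/
private lemma santi (F : ℝ → ℝ)
    (hanti : ∀ x ∈ Set.Ioc (0:ℝ) Real.pi, ∀ y ∈ Set.Ioc (0:ℝ) Real.pi, x ≤ y → F y ≤ F x)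
    (hconv : ∀ x ∈ Set.Ioc (0:ℝ) Real.pi, ∀ y ∈ Set.Ioc (0:ℝ) Real.pi, x ≠ y →
      F ((x + y) / 2) < (F x + F y) / 2) :
    ∀ x ∈ Set.Ioc (0:ℝ) Real.pi, ∀ y ∈ Set.Ioc (0:ℝ) Real.pi, x < y → F y < F x := by
  intro x hx y hy hxy
  have hm : (x + y) / 2 ∈ Set.Ioc (0:ℝ) Real.pi :=
    ⟨by linarith [hx.1, hy.1], by linarith [hx.2, hy.2]⟩
  have h1 : F ((x + y) / 2) ≤ F x := hanti x hx _ hm (by linarith [hx.1])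
  have h2 : F y ≤ F ((x + y) / 2) := hanti _ hm y hy (by linarith [hx.1])
  have h3 := hconv x hx y hy (ne_of_lt hxy)
  linarith

/-- Equal-sum two-point Karamata inequality (nonstrict), from midpoint convexity
and antitonicity, via a dyadic recursion. -/
private lemma karamata_ns (F : ℝ → ℝ)
    (hanti : ∀ x ∈ Set.Ioc (0:ℝ) Real.pi, ∀ y ∈ Set.Ioc (0:ℝ) Real.pi, x ≤ y → F y ≤ F x)
    (hconv : ∀ x ∈ Set.Ioc (0:ℝ) Real.pi, ∀ y ∈ Set.Ioc (0:ℝ) Real.pi, x ≠ y →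
      F ((x + y) / 2) < (F x + F y) / 2)
    (x y r : ℝ) (hx : 0 < x) (hxy : x ≤ y) (hyp : y ≤ Real.pi)
    (hxr : x ≤ r) (hry : r ≤ y) :
    F r + F (x + y - r) ≤ F x + F y := by
  have hxm : x ∈ Set.Ioc (0:ℝ) Real.pi := ⟨hx, by linarith⟩
  have hym : y ∈ Set.Ioc (0:ℝ) Real.pi := ⟨by linarith, hyp⟩
  have key : ∀ k : ℕ, ∀ σ : ℝ, 0 ≤ σ → σ ≤ (y - x) / 2 →
      F ((x + y) / 2 - σ) + F ((x + y) / 2 + σ) ≤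
        (F x + F y) + (2 * F x - (F x + F y)) / 2 ^ k := by
    intro k
    induction k with
    | zero =>
      intro σ h0 h1
      have hm1 : (x + y) / 2 - σ ∈ Set.Ioc (0:ℝ) Real.pi := ⟨by linarith, by linarith⟩
      have hm2 : (x + y) / 2 + σ ∈ Set.Ioc (0:ℝ) Real.pi := ⟨by linarith, by linarith⟩
      have b1 : F ((x + y) / 2 - σ) ≤ F x := hanti x hxm _ hm1 (by linarith)
      have b2 : F ((x + y) / 2 + σ) ≤ F x := hanti x hxm _ hm2 (by linarith)
      simp only [pow_zero]
      linarith
    | succ k ih =>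
      intro σ h0 h1
      have hm0 : (x + y) / 2 ∈ Set.Ioc (0:ℝ) Real.pi := ⟨by linarith, by linarith⟩
      have c3 : F ((x + y) / 2) ≤ (F x + F y) / 2 := convle F hconv x hxm y hym
      have hpow : (2 * F x - (F x + F y)) / 2 ^ (k + 1)
          = ((2 * F x - (F x + F y)) / 2 ^ k) / 2 := by
        rw [pow_succ]; ring
      by_cases hc : σ ≤ (y - x) / 4
      · have hm1 : (x + y) / 2 - 2 * σ ∈ Set.Ioc (0:ℝ) Real.pi := ⟨by linarith, by linarith⟩
        have hm2 : (x + y) / 2 + 2 * σ ∈ Set.Ioc (0:ℝ) Real.pi := ⟨by linarith, by linarith⟩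
        have c1 := convle F hconv _ hm0 _ hm1
        have c2 := convle F hconv _ hm0 _ hm2
        rw [show ((x + y) / 2 + ((x + y) / 2 - 2 * σ)) / 2 = (x + y) / 2 - σ by ring] at c1
        rw [show ((x + y) / 2 + ((x + y) / 2 + 2 * σ)) / 2 = (x + y) / 2 + σ by ring] at c2
        have ih' := ih (2 * σ) (by linarith) (by linarith)
        linarith
      · push_neg at hc
        have hm1 : (x + y) / 2 - (2 * σ - (y - x) / 2) ∈ Set.Ioc (0:ℝ) Real.pi :=
          ⟨by linarith, by linarith⟩
        have hm2 : (x + y) / 2 + (2 * σ - (y - x) / 2) ∈ Set.Ioc (0:ℝ) Real.pi :=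
          ⟨by linarith, by linarith⟩
        have c1 := convle F hconv x hxm _ hm1
        have c2 := convle F hconv y hym _ hm2
        rw [show (x + ((x + y) / 2 - (2 * σ - (y - x) / 2))) / 2 = (x + y) / 2 - σ by ring] at c1
        rw [show (y + ((x + y) / 2 + (2 * σ - (y - x) / 2))) / 2 = (x + y) / 2 + σ by ring] at c2
        have ih' := ih (2 * σ - (y - x) / 2) (by linarith) (by linarith)
        linarith
  have lim : ∀ σ : ℝ, 0 ≤ σ → σ ≤ (y - x) / 2 →
      F ((x + y) / 2 - σ) + F ((x + y) / 2 + σ) ≤ F x + F y := by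
    intro σ h0 h1
    by_contra hcon
    push_neg at hcon
    have hε : 0 < F ((x + y) / 2 - σ) + F ((x + y) / 2 + σ) - (F x + F y) := by linarith
    obtain ⟨k, hk⟩ := pow_unbounded_of_one_lt
      ((2 * F x - (F x + F y)) / (F ((x + y) / 2 - σ) + F ((x + y) / 2 + σ) - (F x + F y)))
      (one_lt_two)
    have h2k : (0:ℝ) < 2 ^ k := by positivity
    have hklt : (2 * F x - (F x + F y)) / 2 ^ k
        < F ((x + y) / 2 - σ) + F ((x + y) / 2 + σ) - (F x + F y) := by
      rw [div_lt_iff₀ h2k]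
      have h3 := (div_lt_iff₀ hε).mp hk
      nlinarith [h3]
    have := key k σ h0 h1
    linarith
  rcases le_total r (x + y - r) with hcase | hcase
  · have := lim ((x + y) / 2 - r) (by linarith) (by linarith)
    rw [show (x + y) / 2 - ((x + y) / 2 - r) = r by ring,
      show (x + y) / 2 + ((x + y) / 2 - r) = x + y - r by ring] at this
    exact this
  · have := lim (r - (x + y) / 2) (by linarith) (by linarith)
    rw [show (x + y) / 2 - (r - (x + y) / 2) = x + y - r by ring,
      show (x + y) / 2 + (r - (x + y) / 2) = r by ring] at this
    linarith

/-- Equal-sum two-point Karamata inequality, strict version. -/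
private lemma karamata_s (F : ℝ → ℝ)
    (hanti : ∀ x ∈ Set.Ioc (0:ℝ) Real.pi, ∀ y ∈ Set.Ioc (0:ℝ) Real.pi, x ≤ y → F y ≤ F x)
    (hconv : ∀ x ∈ Set.Ioc (0:ℝ) Real.pi, ∀ y ∈ Set.Ioc (0:ℝ) Real.pi, x ≠ y →
      F ((x + y) / 2) < (F x + F y) / 2)
    (x y r s : ℝ) (hx : 0 < x) (hyp : y ≤ Real.pi)
    (hxr : x < r) (hrs : r ≤ s) (hsy : s < y) (hsum : r + s = x + y) :
    F r + F s < F x + F y := by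
  have hxm : x ∈ Set.Ioc (0:ℝ) Real.pi := ⟨hx, by linarith⟩
  have hym : y ∈ Set.Ioc (0:ℝ) Real.pi := ⟨by linarith, hyp⟩
  have hr'mem : 2 * r - x ∈ Set.Ioc (0:ℝ) Real.pi := ⟨by linarith, by linarith⟩
  have hs'mem : 2 * s - y ∈ Set.Ioc (0:ℝ) Real.pi := ⟨by linarith, by linarith⟩
  have c1 := hconv x hxm (2 * r - x) hr'mem (by intro h; linarith)
  rw [show (x + (2 * r - x)) / 2 = r by ring] at c1
  have c2 := hconv y hym (2 * s - y) hs'mem (by intro h; linarith)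
  rw [show (y + (2 * s - y)) / 2 = s by ring] at c2
  have c3 := karamata_ns F hanti hconv x y (2 * r - x) hx (by linarith) hyp
    (by linarith) (by linarith)
  rw [show x + y - (2 * r - x) = 2 * s - y by linarith] at c3
  linarith

/-- The main two-point comparison: new pair (p,q) strictly inside on the left,
with at least as large a sum, has strictly smaller potential. -/
private lemma karamata_two (F : ℝ → ℝ)
    (hanti : ∀ x ∈ Set.Ioc (0:ℝ) Real.pi, ∀ y ∈ Set.Ioc (0:ℝ) Real.pi, x ≤ y → F y ≤ F x)
    (hconv : ∀ x ∈ Set.Ioc (0:ℝ) Real.pi, ∀ y ∈ Set.Ioc (0:ℝ) Real.pi, x ≠ y →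
      F ((x + y) / 2) < (F x + F y) / 2)
    (x y p q : ℝ) (hx : 0 < x) (hxy : x < y) (hyp : y ≤ Real.pi)
    (hxp : x < p) (hpq : p ≤ q) (hqp : q ≤ Real.pi) (hsum : x + y ≤ p + q) :
    F p + F q < F x + F y := by
  have hxm : x ∈ Set.Ioc (0:ℝ) Real.pi := ⟨hx, by linarith⟩
  have hym : y ∈ Set.Ioc (0:ℝ) Real.pi := ⟨by linarith, hyp⟩
  have hpm : p ∈ Set.Ioc (0:ℝ) Real.pi := ⟨by linarith, by linarith⟩
  have hqm : q ∈ Set.Ioc (0:ℝ) Real.pi := ⟨by linarith, hqp⟩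
  rcases le_or_gt y q with hyq | hyq
  · have h1 : F q ≤ F y := hanti y hym q hqm hyq
    have h2 : F p < F x := santi F hanti hconv x hxm p hpm hxp
    linarith
  · rcases le_or_gt ((x + y) / 2) p with hmp | hmp
    · have hmm : (x + y) / 2 ∈ Set.Ioc (0:ℝ) Real.pi := ⟨by linarith, by linarith⟩
      have h1 : F p ≤ F ((x + y) / 2) := hanti _ hmm p hpm hmp
      have h2 : F q ≤ F ((x + y) / 2) := hanti _ hmm q hqm (by linarith)
      have h3 := hconv x hxm y hym (ne_of_lt hxy)
      linarith
    · have hp2 : x + y - q ∈ Set.Ioc (0:ℝ) Real.pi := ⟨by linarith, by linarith⟩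
      have h1 : F p ≤ F (x + y - q) := hanti (x + y - q) hp2 p hpm (by linarith)
      have h2 := karamata_s F hanti hconv x y (x + y - q) q hx hyp
        (by linarith) (by linarith) hyq (by ring)
      linarith

/-- Strict antitonicity of `g` on `(0, π]` (ℝ≥0∞-valued). -/
private lemma gstrict (g : ℝ → ℝ≥0∞)
    (hmono : AntitoneOn g (Set.Ioc 0 Real.pi))
    (hconv : ∀ x ∈ Set.Ioc (0 : ℝ) Real.pi, ∀ y ∈ Set.Ioc (0 : ℝ) Real.pi, x ≠ y →
      g ((x + y) / 2) < (g x + g y) / 2) :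
    ∀ x ∈ Set.Ioc (0:ℝ) Real.pi, ∀ y ∈ Set.Ioc (0:ℝ) Real.pi, x < y → g y < g x := by
  intro x hx y hy hxy
  rcases (hmono hx hy hxy.le).lt_or_eq with h | h
  · exact h
  · exfalso
    have hm : (x + y) / 2 ∈ Set.Ioc (0:ℝ) Real.pi :=
      ⟨by linarith [hx.1, hy.1], by linarith [hx.2, hy.2]⟩
    have h3 : g y ≤ g ((x + y) / 2) := hmono hm hy (by linarith [hx.1])
    have hc := hconv x hx y hy (ne_of_lt hxy)
    rw [h] at h3 hc
    have he : (g x + g x) / 2 = g x := by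
      rw [← two_mul, mul_comm, mul_div_assoc,
        ENNReal.div_self two_ne_zero ENNReal.ofNat_ne_top, mul_one]
    rw [he] at hc
    exact absurd (lt_of_le_of_lt h3 hc) (lt_irrefl _)

/-- Core inequality: moving the two points outward by `Δ`. -/
private lemma core_ineq (g : ℝ → ℝ≥0∞)
    (heven : ∀ x : ℝ, g (-x) = g x)
    (hper : Function.Periodic g (2 * Real.pi))
    (hmono : AntitoneOn g (Set.Ioc 0 Real.pi))
    (hconv : ∀ x ∈ Set.Ioc (0 : ℝ) Real.pi, ∀ y ∈ Set.Ioc (0 : ℝ) Real.pi, x ≠ y →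
      g ((x + y) / 2) < (g x + g y) / 2)
    (a b Δ : ℝ) (ha : 0 < a) (hab : a ≤ b) (hΔ : 0 < Δ)
    (hsum : a + b + 2 * Δ < 2 * Real.pi) :
    g (a + Δ) + g (b + Δ) < g a + g b := by
  have hπ := Real.pi_pos
  have hb : 0 < b := lt_of_lt_of_le ha hab
  have haΔ : a + Δ < Real.pi := by linarith
  by_cases hbd : b + Δ ≤ Real.pi
  · exact ENNReal.add_lt_add
      (gstrict g hmono hconv a ⟨ha, by linarith⟩ (a + Δ) ⟨by linarith, by linarith⟩ (by linarith))
      (gstrict g hmono hconv b ⟨hb, by linarith⟩ (b + Δ) ⟨by linarith, hbd⟩ (by linarith))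
  · push_neg at hbd
    have hfin : ∀ x ∈ Set.Ioc (0:ℝ) Real.pi, g x ≠ ⊤ := by
      intro x hx
      exact ne_top_of_lt (gstrict g hmono hconv (x / 2)
        ⟨by linarith [hx.1], by linarith [hx.1, hx.2]⟩ x hx (by linarith [hx.1]))
    set F : ℝ → ℝ := fun x => (g x).toReal with hF
    have hFanti : ∀ x ∈ Set.Ioc (0:ℝ) Real.pi, ∀ y ∈ Set.Ioc (0:ℝ) Real.pi,
        x ≤ y → F y ≤ F x := by
      intro x hx y hy h
      exact (ENNReal.toReal_le_toReal (hfin y hy) (hfin x hx)).mpr (hmono hx hy h)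
    have hFconv : ∀ x ∈ Set.Ioc (0:ℝ) Real.pi, ∀ y ∈ Set.Ioc (0:ℝ) Real.pi, x ≠ y →
        F ((x + y) / 2) < (F x + F y) / 2 := by
      intro x hx y hy hne
      have hm : (x + y) / 2 ∈ Set.Ioc (0:ℝ) Real.pi :=
        ⟨by linarith [hx.1, hy.1], by linarith [hx.2, hy.2]⟩
      have h1 := hconv x hx y hy hne
      have hne2 : (g x + g y) / 2 ≠ ⊤ :=
        (ENNReal.div_lt_top (ENNReal.add_ne_top.mpr ⟨hfin x hx, hfin y hy⟩) (by norm_num)).ne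
      have h2 := (ENNReal.toReal_lt_toReal (hfin _ hm) hne2).mpr h1
      rw [ENNReal.toReal_div, ENNReal.toReal_add (hfin x hx) (hfin y hy)] at h2
      simpa using h2
    have hlift : ∀ p q u v : ℝ, p ∈ Set.Ioc (0:ℝ) Real.pi → q ∈ Set.Ioc (0:ℝ) Real.pi →
        u ∈ Set.Ioc (0:ℝ) Real.pi → v ∈ Set.Ioc (0:ℝ) Real.pi →
        F p + F q < F u + F v → g p + g q < g u + g v := by
      intro p q u v hp hq hu hv h
      have h1 : (g p + g q) ≠ ⊤ := ENNReal.add_ne_top.mpr ⟨hfin _ hp, hfin _ hq⟩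
      have h2 : (g u + g v) ≠ ⊤ := ENNReal.add_ne_top.mpr ⟨hfin _ hu, hfin _ hv⟩
      refine (ENNReal.toReal_lt_toReal h1 h2).mp ?_
      rw [ENNReal.toReal_add (hfin _ hp) (hfin _ hq), ENNReal.toReal_add (hfin _ hu) (hfin _ hv)]
      exact h
    have hgc : g (b + Δ) = g (2 * Real.pi - b - Δ) := by
      have h1 : g (b + Δ) = g (b + Δ - 2 * Real.pi) := by
        have h0 := hper (b + Δ - 2 * Real.pi)
        rw [show b + Δ - 2 * Real.pi + 2 * Real.pi = b + Δ by ring] at h0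
        exact h0
      rw [h1, show b + Δ - 2 * Real.pi = -(2 * Real.pi - b - Δ) by ring, heven]
    have hab2 : a < b := by
      rcases lt_or_eq_of_le hab with h | h
      · exact h
      · exfalso; rw [← h] at hbd; linarith
    have hc1 : a + Δ ≤ 2 * Real.pi - b - Δ := by linarith
    have hcπ : 2 * Real.pi - b - Δ < Real.pi := by linarith
    have hc0 : 0 < 2 * Real.pi - b - Δ := by linarith
    by_cases hbp : b ≤ Real.pi
    · have hreal := karamata_two F hFanti hFconv a b (a + Δ) (2 * Real.pi - b - Δ)
        ha hab2 hbp (by linarith) hc1 (le_of_lt hcπ) (by linarith)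
      rw [hgc]
      exact hlift _ _ _ _ ⟨by linarith, by linarith⟩ ⟨hc0, le_of_lt hcπ⟩
        ⟨ha, by linarith⟩ ⟨hb, hbp⟩ hreal
    · push_neg at hbp
      have hb' : g b = g (2 * Real.pi - b) := by
        have h1 : g (b - 2 * Real.pi) = g b := by
          have h0 := hper (b - 2 * Real.pi)
          rw [show b - 2 * Real.pi + 2 * Real.pi = b by ring] at h0
          exact h0.symm
        rw [← h1, show b - 2 * Real.pi = -(2 * Real.pi - b) by ring, heven]
      have hbb : a < 2 * Real.pi - b := by linarith
      have hreal := karamata_two F hFanti hFconv a (2 * Real.pi - b) (a + Δ)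
        (2 * Real.pi - b - Δ) ha hbb (by linarith) (by linarith) hc1
        (le_of_lt hcπ) (by linarith)
      rw [hgc, hb']
      exact hlift _ _ _ _ ⟨by linarith, by linarith⟩ ⟨hc0, le_of_lt hcπ⟩
        ⟨ha, by linarith⟩ ⟨by linarith, by linarith⟩ hreal

/-- Moving two points symmetrically away from an interval strictly decreases the
two-point potential on that interval, for sufficiently small displacement. -/
theorem two_point_decrease (g : ℝ → ℝ≥0∞)
    (hpos : ∀ x : ℝ, 0 < g x)
    (heven : ∀ x : ℝ, g (-x) = g x)
    (hper : Function.Periodic g (2 * Real.pi))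
    (hmono : AntitoneOn g (Set.Ioc 0 Real.pi))
    (hconv : ∀ x ∈ Set.Ioc (0 : ℝ) Real.pi, ∀ y ∈ Set.Ioc (0 : ℝ) Real.pi, x ≠ y →
      g ((x + y) / 2) < (g x + g y) / 2)
    (t₁ t₂ : ℝ) (hlt : t₁ < t₂) (hgap : t₂ - t₁ < 2 * Real.pi) :
    ∃ δ > (0 : ℝ), ∀ Δ : ℝ, 0 < Δ → Δ < δ → ∀ t ∈ Set.Ioo t₁ t₂,
      g (t - (t₁ - Δ)) + g (t - (t₂ + Δ)) < g (t - t₁) + g (t - t₂) := by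
  refine ⟨Real.pi - (t₂ - t₁) / 2, by linarith, ?_⟩
  intro Δ hΔ hΔδ t ht
  have e1 : t - (t₁ - Δ) = t - t₁ + Δ := by ring
  have e2 : t - (t₂ + Δ) = -(t₂ - t + Δ) := by ring
  have e3 : t - t₂ = -(t₂ - t) := by ring
  rw [e1, e2, e3, heven, heven]
  have h1 : 0 < t - t₁ := by linarith [ht.1]
  have h2 : 0 < t₂ - t := by linarith [ht.2]
  rcases le_total (t - t₁) (t₂ - t) with h | h
  · exact core_ineq g heven hper hmono hconv (t - t₁) (t₂ - t) Δ h1 h hΔ (by linarith)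
  · have hmain := core_ineq g heven hper hmono hconv (t₂ - t) (t - t₁) Δ h2 h hΔ (by linarith)
    rw [add_comm (g (t₂ - t + Δ)) (g (t - t₁ + Δ)), add_comm (g (t₂ - t)) (g (t - t₁))] at hmain
    exact hmain
end

section
/- For s > 0 and points z_k = e^{2πik/n} the nth roots of unity, min over t ∈ [0, 2π) of Σ_{k=1}^n |e^{it} - z_k|^{-s} equals Σ_{k=1}^n |e^{iπ/n} - e^{2πik/n}|^{-s}; i.e., the Riesz s-potential of n equally spaced points on the unit circle is minimized at the midpoints between consecutive points. -/
/-!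
Write the potential as `P t = ∑ₖ g (t - 2πk/n)` with `g x = |e^{ix} - 1|^{-s} = (2 sin (x/2))^{-s}`.
The kernel `g` is even, `2π`-periodic and midpoint convex on `[0, 2π]`, because `sin` is concave
on `[0, π]` and `y ↦ y^{-s}` is decreasing and convex. The shifts `k ↦ k + 1` and `k ↦ -k` permute
the roots of unity, so `P` is even and `2π/n`-periodic; hence it suffices to compare `P (π/n)`
with `P u` for `u ∈ [0, 2π/n]`, and there `P u = P (2π/n - u)`. The arguments of
`g (u + 2πk/n)` and `g (2π/n - u + 2πk/n)` lie in `[0, 2π]` and average to `π/n + 2πk/n`, so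
summing midpoint convexity over `k` gives `2 P (π/n) ≤ P u + P (2π/n - u) = 2 P u`.
-/

open Complex Real Set ENNReal

open Finset Function

section PeriodicSum

variable {M : Type*} [AddCommMonoid M] {n : ℕ} {φ : ℤ → M}

theorem Function.Periodic.sum_range_comp_add_one (hφ : Periodic φ n) :
    ∑ k ∈ range n, φ (k + 1) = ∑ k ∈ range n, φ k := by
  cases n with
  | zero => simp
  | succ m =>
    rw [sum_range_succ, sum_range_succ']
    congr 1
    simpa using hφ 0

theorem Function.Periodic.sum_range_comp_neg (hφ : Periodic φ n) :
    ∑ k ∈ range n, φ (-k) = ∑ k ∈ range n, φ k := by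
  rw [← hφ.sum_range_comp_add_one, ← sum_range_reflect]
  refine sum_congr rfl fun k hk => ?_
  rw [← hφ.sub_eq (k + 1)]
  have := mem_range.mp hk
  congr 1
  omega

end PeriodicSum

theorem Real.two_mul_rpow_neg_add_div_two_le {s a b : ℝ} (hs : 0 ≤ s) (ha : 0 < a) (hb : 0 < b) :
    2 * ((a + b) / 2) ^ (-s) ≤ a ^ (-s) + b ^ (-s) := by
  have amgm {x y : ℝ} (hx : 0 ≤ x) (hy : 0 ≤ y) :
      x ^ (1 / 2 : ℝ) * y ^ (1 / 2 : ℝ) ≤ (x + y) / 2 := by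
    linarith [geom_mean_le_arith_mean2_weighted (by norm_num : (0 : ℝ) ≤ 1 / 2)
      (by norm_num : (0 : ℝ) ≤ 1 / 2) hx hy (by norm_num)]
  calc 2 * ((a + b) / 2) ^ (-s)
      ≤ 2 * (a ^ (1 / 2 : ℝ) * b ^ (1 / 2 : ℝ)) ^ (-s) := by
        gcongr 2 * ?_
        exact rpow_le_rpow_of_nonpos (by positivity) (amgm ha.le hb.le) (neg_nonpos.mpr hs)
    _ = 2 * ((a ^ (-s)) ^ (1 / 2 : ℝ) * (b ^ (-s)) ^ (1 / 2 : ℝ)) := by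
        rw [mul_rpow (by positivity) (by positivity), ← rpow_mul ha.le, ← rpow_mul hb.le,
          ← rpow_mul ha.le, ← rpow_mul hb.le, mul_comm (1 / 2 : ℝ)]
    _ ≤ a ^ (-s) + b ^ (-s) := by
        linarith [amgm (rpow_nonneg ha.le (-s)) (rpow_nonneg hb.le (-s))]

theorem ENNReal.two_mul_ofReal_rpow_neg_le {s a b c : ℝ} (hs : 0 < s) (ha : 0 ≤ a) (hb : 0 ≤ b)
    (hc : (a + b) / 2 ≤ c) :
    2 * ENNReal.ofReal c ^ (-s) ≤ ENNReal.ofReal a ^ (-s) + ENNReal.ofReal b ^ (-s) := by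
  rcases ha.eq_or_lt with rfl | ha
  · simp [ENNReal.zero_rpow_of_neg (neg_neg_of_pos hs)]
  rcases hb.eq_or_lt with rfl | hb
  · simp [ENNReal.zero_rpow_of_neg (neg_neg_of_pos hs)]
  have hc₀ : 0 < c := by linarith
  rw [ENNReal.ofReal_rpow_of_pos ha, ENNReal.ofReal_rpow_of_pos hb, ENNReal.ofReal_rpow_of_pos hc₀,
    ← ENNReal.ofReal_add (by positivity) (by positivity), ← ENNReal.ofReal_ofNat 2,
    ← ENNReal.ofReal_mul zero_le_two]
  refine ENNReal.ofReal_le_ofReal (le_trans ?_ (two_mul_rpow_neg_add_div_two_le hs.le ha hb))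
  gcongr 2 * ?_
  exact rpow_le_rpow_of_nonpos (by positivity) hc (neg_nonpos.mpr hs.le)

theorem Complex.norm_exp_mul_I_sub_exp_mul_I (a b : ℝ) :
    ‖exp (a * I) - exp (b * I)‖ = ‖exp ((a - b : ℝ) * I) - 1‖ := by
  have h : exp (a * I) - exp (b * I) = exp (b * I) * (exp ((a - b : ℝ) * I) - 1) := by
    rw [mul_sub, ← exp_add, mul_one]
    push_cast
    ring_nf
  rw [h, norm_mul, norm_exp_ofReal_mul_I, one_mul]

noncomputable def rieszKernel (s x : ℝ) : ℝ≥0∞ := ENNReal.ofReal ‖exp (x * I) - 1‖ ^ (-s)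

theorem rieszKernel_sub (s a b : ℝ) :
    ENNReal.ofReal ‖exp (a * I) - exp (b * I)‖ ^ (-s) = rieszKernel s (a - b) := by
  rw [rieszKernel, norm_exp_mul_I_sub_exp_mul_I]

theorem rieszKernel_neg (s x : ℝ) : rieszKernel s (-x) = rieszKernel s x := by
  rw [← zero_sub, ← rieszKernel_sub, norm_sub_rev, rieszKernel_sub, sub_zero]

theorem rieszKernel_periodic (s : ℝ) : Periodic (rieszKernel s) (2 * π) := fun x => by
  have h : exp ((x + 2 * π) * I) = exp (x * I) := exp_mul_I_periodic x
  rw [rieszKernel, rieszKernel, Complex.ofReal_add, Complex.ofReal_mul, Complex.ofReal_ofNat, h]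

theorem rieszKernel_eq_ofReal_abs_sin (s x : ℝ) :
    rieszKernel s x = ENNReal.ofReal (2 * |Real.sin (x / 2)|) ^ (-s) := by
  rw [rieszKernel, mul_comm, norm_exp_I_mul_ofReal_sub_one, norm_mul, Real.norm_two,
    Real.norm_eq_abs]

theorem two_mul_rieszKernel_add_div_two_le {s x y : ℝ} (hs : 0 < s) (hx : x ∈ Icc 0 (2 * π))
    (hy : y ∈ Icc 0 (2 * π)) :
    2 * rieszKernel s ((x + y) / 2) ≤ rieszKernel s x + rieszKernel s y := by
  have hx' : x / 2 ∈ Icc 0 π := ⟨by linarith [hx.1], by linarith [hx.2]⟩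
  have hy' : y / 2 ∈ Icc 0 π := ⟨by linarith [hy.1], by linarith [hy.2]⟩
  have hhalf : (0 : ℝ) ≤ 1 / 2 := by norm_num
  have hm : (x + y) / 2 / 2 = (1 / 2 : ℝ) • (x / 2) + (1 / 2 : ℝ) • (y / 2) := by
    simp only [smul_eq_mul]; ring
  have hm' : (x + y) / 2 / 2 ∈ Icc 0 π := hm ▸ convex_Icc 0 π hx' hy' hhalf hhalf (by norm_num)
  have hsin := strictConcaveOn_sin_Icc.concaveOn.2 hx' hy' hhalf hhalf (by norm_num)
  rw [← hm, smul_eq_mul, smul_eq_mul] at hsin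
  simp only [rieszKernel_eq_ofReal_abs_sin]
  refine ENNReal.two_mul_ofReal_rpow_neg_le hs (by positivity) (by positivity) ?_
  rw [abs_of_nonneg (sin_nonneg_of_mem_Icc hx'), abs_of_nonneg (sin_nonneg_of_mem_Icc hy'),
    abs_of_nonneg (sin_nonneg_of_mem_Icc hm')]
  linarith

noncomputable def rootsPotential (n : ℕ) (s t : ℝ) : ℝ≥0∞ :=
  ∑ k ∈ range n, rieszKernel s (t - 2 * π * k / n)

theorem periodic_rieszKernel_sub_roots (n : ℕ) (s t : ℝ) :
    Periodic (fun k : ℤ => rieszKernel s (t - 2 * π * k / n)) n := fun k => by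
  rcases eq_or_ne n 0 with rfl | hn
  · simp
  have : t - 2 * π * ↑(k + n) / n = t - 2 * π * k / n - 2 * π := by
    push_cast
    field_simp
    ring
  simp only [this, (rieszKernel_periodic s).sub_eq]

theorem rootsPotential_eq_sum_add (n : ℕ) (s t : ℝ) :
    rootsPotential n s t = ∑ k ∈ range n, rieszKernel s (t + 2 * π * k / n) := by
  have h := (periodic_rieszKernel_sub_roots n s t).sum_range_comp_neg
  push_cast at h
  simp only [rootsPotential, ← h, mul_neg, neg_div, sub_neg_eq_add]

theorem rootsPotential_neg (n : ℕ) (s t : ℝ) :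
    rootsPotential n s (-t) = rootsPotential n s t := by
  rw [rootsPotential_eq_sum_add n s t, rootsPotential]
  refine sum_congr rfl fun k _ => ?_
  rw [← rieszKernel_neg]
  congr 1
  ring

theorem rootsPotential_periodic (n : ℕ) (s : ℝ) :
    Periodic (rootsPotential n s) (2 * π / n) := fun t => by
  have h := (periodic_rieszKernel_sub_roots n s (t + 2 * π / n)).sum_range_comp_add_one
  push_cast at h
  unfold rootsPotential
  rw [← h]
  refine sum_congr rfl fun k _ => ?_
  congr 1
  ring

theorem rootsPotential_pi_div_le_of_mem_Icc {n : ℕ} {s u : ℝ} (hs : 0 < s)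
    (hu : u ∈ Icc 0 (2 * π / n)) :
    rootsPotential n s (π / n) ≤ rootsPotential n s u := by
  have hreflect : rootsPotential n s (2 * π / n - u) = rootsPotential n s u := by
    rw [← rootsPotential_neg, neg_sub, (rootsPotential_periodic n s).sub_eq]
  have hterm : ∀ k ∈ range n, 2 * rieszKernel s (π / n + 2 * π * k / n) ≤
      rieszKernel s (u + 2 * π * k / n) + rieszKernel s (2 * π / n - u + 2 * π * k / n) := by
    intro k hk
    have hk : (k : ℝ) + 1 ≤ n := by exact_mod_cast mem_range.mp hk
    have hk₀ : 0 ≤ 2 * π * k / n := by positivity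
    have hkn : 2 * π / n + 2 * π * k / n ≤ 2 * π := by
      rw [← add_div, div_le_iff₀ (by linarith)]
      nlinarith [pi_pos]
    have hmid : π / n + 2 * π * k / n =
        (u + 2 * π * k / n + (2 * π / n - u + 2 * π * k / n)) / 2 := by
      ring
    rw [hmid]
    exact two_mul_rieszKernel_add_div_two_le hs ⟨by linarith [hu.1], by linarith [hu.2]⟩
      ⟨by linarith [hu.2], by linarith [hu.1]⟩
  have hsum := sum_le_sum hterm
  rw [← mul_sum, sum_add_distrib, ← rootsPotential_eq_sum_add, ← rootsPotential_eq_sum_add,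
    ← rootsPotential_eq_sum_add, hreflect, ← two_mul] at hsum
  exact (ENNReal.mul_le_mul_iff_right two_ne_zero ofNat_ne_top).mp hsum

theorem rootsPotential_pi_div_le {n : ℕ} {s : ℝ} (hs : 0 < s) (t : ℝ) :
    rootsPotential n s (π / n) ≤ rootsPotential n s t := by
  rcases eq_or_ne n 0 with rfl | hn
  · simp [rootsPotential]
  obtain ⟨u, hu, hut⟩ := (rootsPotential_periodic n s).exists_mem_Ico₀ (by positivity) t
  rw [hut]
  exact rootsPotential_pi_div_le_of_mem_Icc hs (Ico_subset_Icc_self hu)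

theorem riesz_min_at_midpoint_general (n : ℕ) (s : ℝ) (hs : 0 < s) :
    IsLeast ((fun t : ℝ => ∑ k ∈ Finset.range n,
        ENNReal.ofReal ‖Complex.exp (t * Complex.I) -
          Complex.exp ((2 * Real.pi * k / n) * Complex.I)‖ ^ (-s)) ''
      Set.Ico (0 : ℝ) (2 * Real.pi))
      (∑ k ∈ Finset.range n,
        ENNReal.ofReal ‖Complex.exp ((Real.pi / n) * Complex.I) -
          Complex.exp ((2 * Real.pi * k / n) * Complex.I)‖ ^ (-s)) := by
  have hpot (t : ℝ) :
      ∑ k ∈ range n, ENNReal.ofReal ‖exp (t * I) - exp ((2 * π * k / n) * I)‖ ^ (-s) =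
        rootsPotential n s t := by
    simp only [rootsPotential, ← rieszKernel_sub, Complex.ofReal_div, Complex.ofReal_mul,
      Complex.ofReal_ofNat, Complex.ofReal_natCast]
  have hmid : (π / n : ℂ) = ((π / n : ℝ) : ℂ) := by push_cast; rfl
  simp only [hmid, hpot]
  refine ⟨mem_image_of_mem _ ⟨by positivity, ?_⟩, ?_⟩
  · linarith [div_nat_le_self_of_nonnneg pi_pos.le n, pi_pos]
  · rintro _ ⟨t, -, rfl⟩
    exact rootsPotential_pi_div_le hs t

/-- The Riesz `s`-potential of the `n`-th roots of unity is minimized over the circle at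
the midpoints between consecutive points. -/
theorem riesz_min_at_midpoint (n : ℕ) (hn : 1 ≤ n) (s : ℝ) (hs : 0 < s) :
    IsLeast ((fun t : ℝ => ∑ k ∈ Finset.range n,
        ENNReal.ofReal ‖Complex.exp (t * Complex.I) -
          Complex.exp ((2 * Real.pi * k / n) * Complex.I)‖ ^ (-s)) ''
      Set.Ico (0 : ℝ) (2 * Real.pi))
      (∑ k ∈ Finset.range n,
        ENNReal.ofReal ‖Complex.exp ((Real.pi / n) * Complex.I) -
          Complex.exp ((2 * Real.pi * k / n) * Complex.I)‖ ^ (-s)) :=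
  riesz_min_at_midpoint_general n s hs
end

section
/- For every n ≥ 1, Σ_{k=1}^n |e^{iπ/n} - e^{2πik/n}|^{-2} = n²/4, and Σ_{k=1}^n |e^{iπ/n} - e^{2πik/n}|^{-4} = n²/24 + n⁴/48. -/
/-!
Put `u_k = e^{-iπ/n} e^{2πik/n}`, so that `|e^{iπ/n} - e^{2πik/n}| = |1 - u_k|` and `u_k ^ n = -1`.
For such `u` the geometric sum `G(u) = ∑_{m<n} u^m` satisfies `(1 - u) G(u) = 2`, hence
`|1 - u|⁻² = |G(u)|² / 4`, and reducing modulo `u^n = -1` gives `G(u)² = ∑_{m<n} (2m+2-n) u^m`.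
Both sums are therefore of the form `∑_k |P(u_k)|²` with `deg P < n`, which Parseval's identity for
the points `u_k` evaluates as `n ∑ |coeff P|²`: this is `n · n / 4` and `n ∑_{m<n} (2m+2-n)² / 16`.
-/

open Complex Real Finset ComplexConjugate

theorem one_sub_mul_sum_range_succ_mul_pow {R : Type*} [CommRing R] (u : R) (n : ℕ) :
    (1 - u) * ∑ m ∈ range n, ((m : R) + 1) * u ^ m = ∑ m ∈ range n, u ^ m - n * u ^ n := by
  induction n with
  | zero => simp
  | succ n ih =>
    rw [sum_range_succ, mul_add, ih, sum_range_succ]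
    push_cast
    ring

theorem geom_sum_sq_of_pow_eq_neg_one {K : Type*} [Field K] [NeZero (2 : K)] {u : K} {n : ℕ}
    (hu : u ^ n = -1) :
    (∑ m ∈ range n, u ^ m) ^ 2 = ∑ m ∈ range n, (2 * (m : K) + 2 - n) * u ^ m := by
  have hu1 : 1 - u ≠ 0 := by
    intro h
    rw [← eq_of_sub_eq_zero h, one_pow, eq_neg_iff_add_eq_zero, one_add_one_eq_two] at hu
    exact two_ne_zero hu
  apply mul_left_cancel₀ hu1
  have hlin : ∑ m ∈ range n, (2 * (m : K) + 2 - n) * u ^ m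
      = 2 * ∑ m ∈ range n, ((m : K) + 1) * u ^ m - n * ∑ m ∈ range n, u ^ m := by
    rw [mul_sum, mul_sum, ← sum_sub_distrib]
    exact sum_congr rfl fun m _ ↦ by ring
  rw [hlin]
  linear_combination (∑ m ∈ range n, u ^ m + n) * mul_neg_geom_sum u n
    - 2 * one_sub_mul_sum_range_succ_mul_pow u n + (n - ∑ m ∈ range n, u ^ m) * hu

theorem inv_norm_one_sub_sq_of_pow_eq_neg_one {u : ℂ} {n : ℕ} (hu : u ^ n = -1) :
    (‖1 - u‖ ^ 2)⁻¹ = ‖∑ m ∈ range n, u ^ m‖ ^ 2 / 4 := by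
  have h : ‖1 - u‖ * ‖∑ m ∈ range n, u ^ m‖ = 2 := by
    rw [← norm_mul, mul_neg_geom_sum, hu]
    norm_num
  refine inv_eq_of_mul_eq_one_right ?_
  linear_combination (‖1 - u‖ * ‖∑ m ∈ range n, u ^ m‖ + 2) / 4 * h

theorem inv_norm_one_sub_pow_four_of_pow_eq_neg_one {u : ℂ} {n : ℕ} (hu : u ^ n = -1) :
    (‖1 - u‖ ^ 4)⁻¹ = ‖∑ m ∈ range n, (2 * (m : ℂ) + 2 - n) * u ^ m‖ ^ 2 / 16 := by
  rw [← geom_sum_sq_of_pow_eq_neg_one hu, norm_pow, show ‖1 - u‖ ^ 4 = (‖1 - u‖ ^ 2) ^ 2 by ring,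
    ← inv_pow, inv_norm_one_sub_sq_of_pow_eq_neg_one hu]
  ring

theorem sum_range_two_mul_add_sq {R : Type*} [CommRing R] (x : R) (n : ℕ) :
    3 * ∑ m ∈ range n, (2 * (m : R) + x) ^ 2
      = n * (3 * x ^ 2 + 6 * (n - 1) * x + 2 * (n - 1) * (2 * n - 1)) := by
  induction n with
  | zero => simp
  | succ n ih =>
    rw [sum_range_succ, mul_add, ih]
    push_cast
    ring

namespace IsPrimitiveRoot

variable {ω α : ℂ} {n : ℕ}

theorem sum_pow_mul_conj_pow (hω : IsPrimitiveRoot ω n) (hα : ‖α‖ = 1) {a b : ℕ}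
    (ha : a < n) (hb : b < n) :
    ∑ k ∈ range n, (α * ω ^ k) ^ a * conj ((α * ω ^ k) ^ b) = if a = b then (n : ℂ) else 0 := by
  have hω1 : ‖ω‖ = 1 := hω.norm'_eq_one (by omega)
  have hω0 : ω ≠ 0 := hω.ne_zero (by omega)
  have hα0 : α ≠ 0 := norm_ne_zero_iff.mp (by simp [hα])
  have hconj (k : ℕ) : conj ((α * ω ^ k) ^ b) = ((α * ω ^ k) ^ b)⁻¹ :=
    (inv_eq_conj (by simp [hα, hω1])).symm
  simp_rw [hconj]
  split_ifs with hab
  · subst hab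
    simp [hα0, hω0]
  · set y := ω ^ a / ω ^ b
    have hy : y ≠ 1 := fun h ↦ hab <| hω.pow_inj ha hb <| (div_eq_one_iff_eq (by simp [hω0])).mp h
    have hyn : y ^ n = 1 := by
      rw [div_pow, ← pow_mul, ← pow_mul, mul_comm a, mul_comm b, pow_mul, pow_mul, hω.pow_eq_one,
        one_pow, one_pow, div_one]
    calc ∑ k ∈ range n, (α * ω ^ k) ^ a * ((α * ω ^ k) ^ b)⁻¹
        = α ^ a / α ^ b * ∑ k ∈ range n, y ^ k := by
          rw [mul_sum]
          refine sum_congr rfl fun k _ ↦ ?_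
          rw [mul_pow, mul_pow, div_pow, ← pow_mul, ← pow_mul, ← pow_mul, ← pow_mul, mul_comm a k,
            mul_comm b k]
          ring
      _ = 0 := by rw [geom_sum_eq hy, hyn, sub_self, zero_div, mul_zero]

theorem sum_norm_sq_sum_mul_pow (hω : IsPrimitiveRoot ω n) (hα : ‖α‖ = 1) (c : ℕ → ℂ) :
    ∑ k ∈ range n, ‖∑ m ∈ range n, c m * (α * ω ^ k) ^ m‖ ^ 2 = n * ∑ m ∈ range n, ‖c m‖ ^ 2 := by
  apply ofReal_injective
  push_cast
  calc ∑ k ∈ range n, (‖∑ m ∈ range n, c m * (α * ω ^ k) ^ m‖ : ℂ) ^ 2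
      = ∑ a ∈ range n, ∑ b ∈ range n, c a * conj (c b) *
          ∑ k ∈ range n, (α * ω ^ k) ^ a * conj ((α * ω ^ k) ^ b) := by
        simp_rw [← mul_conj', map_sum, map_mul, sum_mul_sum, mul_sum]
        rw [sum_comm]
        refine sum_congr rfl fun a _ ↦ ?_
        rw [sum_comm]
        exact sum_congr rfl fun b _ ↦ sum_congr rfl fun k _ ↦ by ring
    _ = n * ∑ m ∈ range n, (‖c m‖ : ℂ) ^ 2 := by
        rw [mul_sum]
        refine sum_congr rfl fun a ha ↦ ?_
        rw [sum_congr rfl fun b hb ↦ by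
          rw [hω.sum_pow_mul_conj_pow hα (mem_range.mp ha) (mem_range.mp hb), mul_ite, mul_zero]]
        rw [sum_ite_eq, if_pos ha, mul_conj']
        ring

end IsPrimitiveRoot

theorem norm_exp_div_mul_I (x : ℝ) (n : ℕ) : ‖exp (x / n * I)‖ = 1 := by
  simp [Complex.norm_exp]

theorem exp_pi_div_mul_I_pow {n : ℕ} (hn : n ≠ 0) : exp (π / n * I) ^ n = -1 := by
  rw [← Complex.exp_nat_mul, ← exp_pi_mul_I]
  congr 1
  field_simp

theorem norm_exp_sub_exp_eq_norm_one_sub (n k : ℕ) :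
    ‖exp (π / n * I) - exp (2 * π * k / n * I)‖
      = ‖1 - (exp (π / n * I))⁻¹ * exp (2 * π * I / n) ^ k‖ := by
  have hk : exp (2 * π * k / n * I) = exp (2 * π * I / n) ^ k := by
    rw [← Complex.exp_nat_mul]
    ring_nf
  rw [hk, ← one_mul ‖1 - _‖, ← norm_exp_div_mul_I π n, ← norm_mul, mul_sub, mul_one,
    mul_inv_cancel_left₀ (Complex.exp_ne_zero _)]

theorem norm_two_mul_add_two_sub_sq (m n : ℕ) :
    ‖2 * (m : ℂ) + 2 - n‖ ^ 2 = (2 * (m : ℝ) + (2 - n)) ^ 2 := by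
  have h : 2 * (m : ℂ) + 2 - n = ((2 * (m : ℝ) + (2 - n) : ℝ) : ℂ) := by push_cast; ring
  rw [h, norm_real, Real.norm_eq_abs, sq_abs]

/-- Values of the Riesz `s`-potential of the `n`-th roots of unity at the midpoint,
for `s = 2` and `s = 4`. -/
theorem riesz_midpoint_values (n : ℕ) (hn : 1 ≤ n) :
    (∑ k ∈ Finset.range n,
        (‖Complex.exp ((Real.pi / n) * Complex.I) -
          Complex.exp ((2 * Real.pi * k / n) * Complex.I)‖ ^ 2)⁻¹ = (n : ℝ) ^ 2 / 4) ∧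
    (∑ k ∈ Finset.range n,
        (‖Complex.exp ((Real.pi / n) * Complex.I) -
          Complex.exp ((2 * Real.pi * k / n) * Complex.I)‖ ^ 4)⁻¹
      = (n : ℝ) ^ 2 / 24 + (n : ℝ) ^ 4 / 48) := by
  have hn0 : n ≠ 0 := by omega
  simp_rw [norm_exp_sub_exp_eq_norm_one_sub]
  set α := (exp (π / n * I))⁻¹
  set ω := exp (2 * π * I / n)
  have hω : IsPrimitiveRoot ω n := isPrimitiveRoot_exp n hn0
  have hα : ‖α‖ = 1 := by rw [norm_inv, norm_exp_div_mul_I, inv_one]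
  have hu (k : ℕ) : (α * ω ^ k) ^ n = -1 := by
    rw [mul_pow, ← pow_mul, mul_comm k, pow_mul, hω.pow_eq_one, one_pow, mul_one, inv_pow,
      exp_pi_div_mul_I_pow hn0, inv_neg_one]
  constructor
  · have h := hω.sum_norm_sq_sum_mul_pow hα 1
    simp only [Pi.one_apply, one_mul, norm_one, one_pow, sum_const, card_range, nsmul_eq_mul,
      mul_one] at h
    simp_rw [inv_norm_one_sub_sq_of_pow_eq_neg_one (hu _), ← sum_div, h, sq]
  · simp_rw [inv_norm_one_sub_pow_four_of_pow_eq_neg_one (hu _), ← sum_div,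
      hω.sum_norm_sq_sum_mul_pow hα, norm_two_mul_add_two_sub_sq]
    linear_combination (n : ℝ) / 48 * sum_range_two_mul_add_sq (2 - (n : ℝ)) n
end

section
/- Let f(t) = csc²(t/2) = 1/sin²(t/2). Then for every k ≥ 0 and t ∈ (0, π), (-1)^k f^{(k)}(t) > 0. Consequently, for every even positive integer m, the function g_m(t) = (1/4) f^{(m-2)}(t) (for m ≥ 2), extended evenly and 2π-periodically, is positive, strictly decreasing, and strictly convex on (0, π). -/
/-!
Since `d/dt cot(t/2) = -(1 + cot²(t/2))/2` and `csc²(t/2) = 1 + cot²(t/2)`, induction gives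
`f⁽ᵏ⁾(t) = (-1/2)ᵏ Qₖ(cot(t/2))`, where `Qₖ = cscSqDerivPoly k` is given by `Q₀ = 1 + X²` and
`Qₖ₊₁ = (1 + X²) Qₖ'`. Each `Qₖ` is a nonzero polynomial with natural coefficients (of degree
`k + 2`), hence positive at `cot(t/2) > 0`. For even `j`, the signs of `f⁽ʲ⁾`, `f⁽ʲ⁺¹⁾`,
`f⁽ʲ⁺²⁾` then give positivity, strict decrease and strict convexity.
-/

open Real Polynomial

theorem Polynomial.aeval_pos_of_ne_zero {R : Type*} [CommSemiring R] [PartialOrder R]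
    [IsStrictOrderedRing R] {p : ℕ[X]} (hp : p ≠ 0) {x : R} (hx : 0 < x) : 0 < aeval x p := by
  rw [aeval_eq_sum_range]
  refine Finset.sum_pos' (fun i _ => by positivity) ⟨p.natDegree, by simp, ?_⟩
  have : 0 < p.leadingCoeff := Nat.pos_of_ne_zero (leadingCoeff_ne_zero.2 hp)
  positivity

noncomputable def cscSqDerivPoly : ℕ → ℕ[X]
  | 0 => 1 + X ^ 2
  | k + 1 => (1 + X ^ 2) * derivative (cscSqDerivPoly k)

theorem natDegree_cscSqDerivPoly (k : ℕ) : (cscSqDerivPoly k).natDegree = k + 2 := by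
  have h : (1 + X ^ 2 : ℕ[X]).natDegree = 2 := by
    rw [add_comm]; exact natDegree_X_pow_add_C (n := 2) (r := 1)
  induction k with
  | zero => exact h
  | succ k ih =>
    have hd : (derivative (cscSqDerivPoly k)).natDegree = k + 1 := by
      rw [natDegree_derivative, ih]; rfl
    rw [cscSqDerivPoly, natDegree_mul (ne_zero_of_natDegree_gt (n := 0) (by omega))
      (ne_zero_of_natDegree_gt (n := 0) (by omega)), h, hd]
    ring

theorem cscSqDerivPoly_ne_zero (k : ℕ) : cscSqDerivPoly k ≠ 0 :=
  ne_zero_of_natDegree_gt (n := 0) (by rw [natDegree_cscSqDerivPoly]; omega)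

theorem Real.one_add_cot_sq {x : ℝ} (hx : sin x ≠ 0) : 1 + cot x ^ 2 = (sin x ^ 2)⁻¹ := by
  rw [cot_eq_cos_div_sin]
  field_simp
  linarith [sin_sq_add_cos_sq x]

theorem Real.hasDerivAt_cot {x : ℝ} (hx : sin x ≠ 0) : HasDerivAt cot (-(1 + cot x ^ 2)) x := by
  have h := (hasDerivAt_cos x).div (hasDerivAt_sin x) hx
  rw [show (cos / sin : ℝ → ℝ) = cot from funext fun y => (cot_eq_cos_div_sin y).symm] at h
  refine h.congr_deriv ?_
  rw [one_add_cot_sq hx]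
  field_simp
  linarith [sin_sq_add_cos_sq x]

theorem hasDerivAt_aeval_cot_half (p : ℕ[X]) {t : ℝ} (ht : sin (t / 2) ≠ 0) :
    HasDerivAt (fun s => aeval (cot (s / 2)) p)
      (-(1 / 2) * aeval (cot (t / 2)) ((1 + X ^ 2) * derivative p)) t := by
  have h := (p.hasDerivAt_aeval (cot (t / 2))).comp t
    ((hasDerivAt_cot ht).comp t ((hasDerivAt_id t).div_const 2))
  refine h.congr_deriv ?_
  simp only [map_mul, map_add, map_one, map_pow, aeval_X]
  ring

theorem iteratedDeriv_inv_sin_half_sq (k : ℕ) {t : ℝ} (ht : sin (t / 2) ≠ 0) :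
    iteratedDeriv k (fun s => (sin (s / 2) ^ 2)⁻¹) t =
      (-(1 / 2)) ^ k * aeval (cot (t / 2)) (cscSqDerivPoly k) := by
  induction k generalizing t with
  | zero => simp [cscSqDerivPoly, one_add_cot_sq ht]
  | succ k ih =>
    have hopen : IsOpen {s : ℝ | sin (s / 2) ≠ 0} :=
      isOpen_ne_fun (by fun_prop) continuous_const
    have hnear : iteratedDeriv k (fun s => (sin (s / 2) ^ 2)⁻¹) =ᶠ[nhds t]
        fun s => (-(1 / 2)) ^ k * aeval (cot (s / 2)) (cscSqDerivPoly k) :=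
      Filter.eventuallyEq_of_mem (hopen.mem_nhds ht) fun s hs => ih hs
    rw [iteratedDeriv_succ, hnear.deriv_eq,
      ((hasDerivAt_aeval_cot_half _ ht).const_mul _).deriv, cscSqDerivPoly]
    ring

theorem Real.cot_pos_of_mem_Ioo {x : ℝ} (hx : x ∈ Set.Ioo 0 (π / 2)) : 0 < cot x := by
  rw [cot_eq_cos_div_sin]
  exact div_pos (cos_pos_of_mem_Ioo ⟨by linarith [hx.1, pi_pos], hx.2⟩)
    (sin_pos_of_pos_of_lt_pi hx.1 (by linarith [hx.2, pi_pos]))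

theorem neg_one_pow_mul_iteratedDeriv_inv_sin_half_sq_pos (k : ℕ) {t : ℝ}
    (ht : t ∈ Set.Ioo 0 π) :
    0 < (-1) ^ k * iteratedDeriv k (fun s => (sin (s / 2) ^ 2)⁻¹) t := by
  have hsin : 0 < sin (t / 2) :=
    sin_pos_of_pos_of_lt_pi (by linarith [ht.1]) (by linarith [ht.2, pi_pos])
  have hcot : 0 < cot (t / 2) := cot_pos_of_mem_Ioo ⟨by linarith [ht.1], by linarith [ht.2]⟩
  rw [iteratedDeriv_inv_sin_half_sq k hsin.ne', ← mul_assoc, ← mul_pow]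
  have := aeval_pos_of_ne_zero (cscSqDerivPoly_ne_zero k) hcot
  rw [show (-1 : ℝ) * -(1 / 2) = 1 / 2 by norm_num]
  positivity

theorem continuousOn_of_deriv_ne_zero {g : ℝ → ℝ} {D : Set ℝ} (h : ∀ t ∈ D, deriv g t ≠ 0) :
    ContinuousOn g D :=
  fun t ht => (differentiableAt_of_deriv_ne_zero (h t ht)).continuousAt.continuousWithinAt

theorem pos_strictAntiOn_strictConvexOn_const_mul_iteratedDeriv {F : ℝ → ℝ} {D : Set ℝ}
    (hD : Convex ℝ D) (hF : ∀ k : ℕ, ∀ t ∈ D, 0 < (-1 : ℝ) ^ k * iteratedDeriv k F t)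
    {j : ℕ} (hj : Even j) {c : ℝ} (hc : 0 < c) :
    (∀ t ∈ D, 0 < c * iteratedDeriv j F t) ∧
      StrictAntiOn (fun t => c * iteratedDeriv j F t) D ∧
      StrictConvexOn ℝ D (fun t => c * iteratedDeriv j F t) := by
  set g := fun t => c * iteratedDeriv j F t
  have hg' : deriv g = fun t => c * iteratedDeriv (j + 1) F t := by
    simp only [g, deriv_const_mul_field', iteratedDeriv_succ]
  have hg'' : deriv^[2] g = fun t => c * iteratedDeriv (j + 2) F t := by
    simp only [Function.iterate_succ_apply, Function.iterate_zero_apply, hg',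
      deriv_const_mul_field', iteratedDeriv_succ]
  have hg'_neg : ∀ t ∈ D, deriv g t < 0 := fun t ht => by
    have := hF (j + 1) t ht
    rw [hj.add_one.neg_one_pow, neg_one_mul, neg_pos] at this
    rw [hg']
    exact mul_neg_of_pos_of_neg hc this
  have hg_cont : ContinuousOn g D :=
    continuousOn_of_deriv_ne_zero fun t ht => (hg'_neg t ht).ne
  refine ⟨fun t ht => ?_, ?_, ?_⟩
  · have := hF j t ht
    rw [hj.neg_one_pow, one_mul] at this
    exact mul_pos hc this
  · exact strictAntiOn_of_deriv_neg hD hg_cont fun t ht => hg'_neg t (interior_subset ht)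
  · refine strictConvexOn_of_deriv2_pos' hD hg_cont fun t ht => ?_
    have := hF (j + 2) t ht
    rw [(hj.add even_two).neg_one_pow, one_mul] at this
    rw [hg'']
    exact mul_pos hc this

/-- For `f(t) = csc²(t/2)`, `(-1)^k f^{(k)} > 0` on `(0, π)`; consequently for each even
`m ≥ 2`, the kernel `g_m = (1/4) f^{(m-2)}` is positive, strictly decreasing and strictly
convex on `(0, π)`. -/
theorem csc_sq_derivs (f : ℝ → ℝ) (hf : f = fun t => (Real.sin (t / 2) ^ 2)⁻¹) :
    (∀ k : ℕ, ∀ t ∈ Set.Ioo (0 : ℝ) Real.pi, 0 < (-1 : ℝ) ^ k * iteratedDeriv k f t) ∧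
    (∀ m : ℕ, Even m → 2 ≤ m →
      (∀ t ∈ Set.Ioo (0 : ℝ) Real.pi, 0 < (1 / 4 : ℝ) * iteratedDeriv (m - 2) f t) ∧
      StrictAntiOn (fun t => (1 / 4 : ℝ) * iteratedDeriv (m - 2) f t)
        (Set.Ioo (0 : ℝ) Real.pi) ∧
      StrictConvexOn ℝ (Set.Ioo (0 : ℝ) Real.pi)
        (fun t => (1 / 4 : ℝ) * iteratedDeriv (m - 2) f t)) := by
  have hsign : ∀ k : ℕ, ∀ t ∈ Set.Ioo 0 π, 0 < (-1 : ℝ) ^ k * iteratedDeriv k f t :=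
    fun k t ht => hf ▸ neg_one_pow_mul_iteratedDeriv_inv_sin_half_sq_pos k ht
  refine ⟨hsign, fun m hm h2m => ?_⟩
  obtain ⟨j, rfl⟩ := Nat.exists_eq_add_of_le' h2m
  rw [Nat.add_sub_cancel]
  exact pos_strictAntiOn_strictConvexOn_const_mul_iteratedDeriv (convex_Ioo 0 π) hsign
    ((Nat.even_add.1 hm).2 even_two) (by norm_num)
end
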